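/- arXiv:0802.3584 — 7 statements merged into one kernel-verified Lean document; each statement's English description precedes it below -/
import Mathlib

section
/- Let s > n/2. There is a constant C = C(s,n) such that for all h ∈ (0,1] and all nonnegative functions ũ, ṽ, w ∈ L²(ℝⁿ): ∫ ⟨hξ⟩^s w(ξ) ((⟨h·⟩^{-s} ũ) * (⟨h·⟩^{-s} ṽ))(ξ) dξ ≤ C h^{-n/2} ‖ũ‖_{L²} ‖ṽ‖_{L²} ‖w‖_{L²}, where * denotes convolution. -/
/-!
Peetre's inequality `⟨hξ⟩^s ⟨hy⟩^{-s} ⟨h(ξ-y)⟩^{-s} ≤ 2^s (⟨hy⟩^{-s} + ⟨h(ξ-y)⟩^{-s})` splits the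
left-hand side into two terms of the shape `∫ w · ((⟨h·⟩^{-s} f) * g)`. Applying Cauchy–Schwarz to `w` and
each translate of `g` bounds such a term by
`‖⟨h·⟩^{-s} f‖₁ ‖g‖₂ ‖w‖₂ ≤ ‖⟨h·⟩^{-s}‖₂ ‖f‖₂ ‖g‖₂ ‖w‖₂`, and by scaling
`‖⟨h·⟩^{-s}‖₂ = h^{-n/2} ‖⟨·⟩^{-s}‖₂`, which is finite because `2s > n`.
-/

open MeasureTheory
open scoped ENNReal

lemma rpow_mul_rpow_neg_mul_rpow_neg_le {a b c t : ℝ} (ha : 0 < a) (hb : 0 < b) (hc : 0 ≤ c)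
    (hcab : c ≤ 2 * (a + b)) (ht : 0 ≤ t) :
    c ^ t * (a ^ (-t) * b ^ (-t)) ≤ 4 ^ t * (a ^ (-t) + b ^ (-t)) := by
  wlog hab : a ≤ b generalizing a b
  · have := this hb ha (by linarith) (le_of_not_ge hab)
    rwa [mul_comm (b ^ (-t)), add_comm] at this
  have hc4 : c ^ t ≤ 4 ^ t * b ^ t := by
    rw [← Real.mul_rpow (by norm_num) hb.le]
    exact Real.rpow_le_rpow hc (by linarith) ht
  calc c ^ t * (a ^ (-t) * b ^ (-t)) ≤ 4 ^ t * b ^ t * (a ^ (-t) * b ^ (-t)) := by gcongr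
    _ = 4 ^ t * a ^ (-t) := by
      rw [Real.rpow_neg hb.le]
      field_simp [(Real.rpow_pos_of_pos hb t).ne']
    _ ≤ 4 ^ t * (a ^ (-t) + b ^ (-t)) := by
      gcongr
      exact le_add_of_nonneg_right (by positivity)

lemma one_add_sq_mul_norm_sq_le {E : Type*} [SeminormedAddGroup E] (h : ℝ) (x y : E) :
    1 + h ^ 2 * ‖x‖ ^ 2 ≤ 2 * ((1 + h ^ 2 * ‖y‖ ^ 2) + (1 + h ^ 2 * ‖x - y‖ ^ 2)) := by
  have htri : ‖x‖ ≤ ‖y‖ + ‖x - y‖ := norm_le_norm_add_norm_sub' x y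
  have hsq : ‖x‖ ^ 2 ≤ 2 * ‖y‖ ^ 2 + 2 * ‖x - y‖ ^ 2 := by
    nlinarith [norm_nonneg x, sq_nonneg (‖y‖ - ‖x - y‖)]
  nlinarith [mul_le_mul_of_nonneg_left hsq (sq_nonneg h)]

section LpTwo

variable {α : Type*} [MeasurableSpace α] {μ : Measure α}

lemma lintegral_mul_le_eLpNorm_two_mul {f g : α → ℝ≥0∞} (hf : AEMeasurable f μ)
    (hg : AEMeasurable g μ) : ∫⁻ x, f x * g x ∂μ ≤ eLpNorm f 2 μ * eLpNorm g 2 μ := by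
  simpa [eLpNorm_eq_lintegral_rpow_enorm_toReal] using
    ENNReal.lintegral_mul_le_Lp_mul_Lq μ Real.HolderConjugate.two_two hf hg

end LpTwo

section Convolution

variable {G : Type*} [MeasurableSpace G] [AddCommGroup G] [MeasurableAdd₂ G] [MeasurableNeg G]
  {μ : Measure G} [μ.IsAddLeftInvariant]

lemma lintegral_mul_comp_sub_le {f g : G → ℝ≥0∞} (hf : Measurable f) (hg : Measurable g) (y : G) :
    ∫⁻ x, f x * g (x - y) ∂μ ≤ eLpNorm f 2 μ * eLpNorm g 2 μ := by
  calc ∫⁻ x, f x * g (x - y) ∂μ ≤ eLpNorm f 2 μ * eLpNorm (g ∘ (· - y)) 2 μ :=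
        lintegral_mul_le_eLpNorm_two_mul hf.aemeasurable
          (hg.comp (measurable_sub_const y)).aemeasurable
    _ = eLpNorm f 2 μ * eLpNorm g 2 μ := by
        rw [eLpNorm_comp_measurePreserving hg.aestronglyMeasurable
          (measurePreserving_sub_right μ y)]

lemma lintegral_mul_comp_sub_comm [μ.IsNegInvariant] (f g : G → ℝ≥0∞) (x : G) :
    ∫⁻ y, f (x - y) * g y ∂μ = ∫⁻ y, f y * g (x - y) ∂μ := by
  simpa only [sub_sub_cancel] using lintegral_sub_left_eq_self (μ := μ) (fun y => f y * g (x - y)) x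

variable [SFinite μ]

lemma lintegral_mul_lintegral_mul_comp_sub_le {φ f g : G → ℝ≥0∞} (hφ : Measurable φ)
    (hf : Measurable f) (hg : Measurable g) :
    ∫⁻ x, f x * ∫⁻ y, φ y * g (x - y) ∂μ ∂μ ≤
      (∫⁻ y, φ y ∂μ) * (eLpNorm f 2 μ * eLpNorm g 2 μ) := by
  calc ∫⁻ x, f x * ∫⁻ y, φ y * g (x - y) ∂μ ∂μ
      = ∫⁻ x, ∫⁻ y, φ y * (f x * g (x - y)) ∂μ ∂μ := by
        refine lintegral_congr fun x => ?_
        rw [← lintegral_const_mul _ (by fun_prop)]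
        exact lintegral_congr fun y => by ring
    _ = ∫⁻ y, φ y * ∫⁻ x, f x * g (x - y) ∂μ ∂μ := by
        rw [lintegral_lintegral_swap (by fun_prop)]
        exact lintegral_congr fun y => lintegral_const_mul _ (by fun_prop)
    _ ≤ ∫⁻ y, φ y * (eLpNorm f 2 μ * eLpNorm g 2 μ) ∂μ := by
        gcongr with y
        exact lintegral_mul_comp_sub_le hf hg y
    _ = (∫⁻ y, φ y ∂μ) * (eLpNorm f 2 μ * eLpNorm g 2 μ) := lintegral_mul_const _ hφ


theorem lintegral_weighted_convolution_le [μ.IsNegInvariant] {A B U V W : G → ℝ≥0∞}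
    {K : ℝ≥0∞} (hB : Measurable B) (hU : Measurable U) (hV : Measurable V) (hW : Measurable W)
    (hAB : ∀ x y, A x * (B y * B (x - y)) ≤ K * (B y + B (x - y))) :
    ∫⁻ x, A x * W x * ∫⁻ y, B y * U y * (B (x - y) * V (x - y)) ∂μ ∂μ ≤
      2 * K * eLpNorm B 2 μ * (eLpNorm U 2 μ * (eLpNorm V 2 μ * eLpNorm W 2 μ)) := by
  have hpt : ∀ x, A x * W x * ∫⁻ y, B y * U y * (B (x - y) * V (x - y)) ∂μ ≤
      K * (W x * ∫⁻ y, B y * U y * V (x - y) ∂μ) +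
        K * (W x * ∫⁻ y, B y * V y * U (x - y) ∂μ) := fun x => by
    calc A x * W x * ∫⁻ y, B y * U y * (B (x - y) * V (x - y)) ∂μ
        ≤ W x * ∫⁻ y, A x * (B y * U y * (B (x - y) * V (x - y))) ∂μ := by
          rw [mul_comm (A x), mul_assoc]
          gcongr
          exact lintegral_const_mul_le _ _
      _ ≤ W x * ∫⁻ y, K * (B y * U y * V (x - y) + B (x - y) * V (x - y) * U y) ∂μ := by
          refine mul_le_mul_right (lintegral_mono fun y => ?_) _
          calc A x * (B y * U y * (B (x - y) * V (x - y)))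
              = A x * (B y * B (x - y)) * (U y * V (x - y)) := by ring
            _ ≤ K * (B y + B (x - y)) * (U y * V (x - y)) := mul_le_mul_left (hAB x y) _
            _ = _ := by ring
      _ = K * (W x * ∫⁻ y, B y * U y * V (x - y) ∂μ) +
            K * (W x * ∫⁻ y, B y * V y * U (x - y) ∂μ) := by
          rw [lintegral_const_mul _ (by fun_prop), lintegral_add_left (by fun_prop),
            ← lintegral_mul_comp_sub_comm (fun z => B z * V z) U x]
          ring
  calc ∫⁻ x, A x * W x * ∫⁻ y, B y * U y * (B (x - y) * V (x - y)) ∂μ ∂μ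
      ≤ ∫⁻ x, K * (W x * ∫⁻ y, B y * U y * V (x - y) ∂μ) +
          K * (W x * ∫⁻ y, B y * V y * U (x - y) ∂μ) ∂μ := lintegral_mono hpt
    _ = K * ∫⁻ x, W x * ∫⁻ y, B y * U y * V (x - y) ∂μ ∂μ +
          K * ∫⁻ x, W x * ∫⁻ y, B y * V y * U (x - y) ∂μ ∂μ := by
      have hconv : ∀ {F H : G → ℝ≥0∞}, Measurable F → Measurable H →
          Measurable fun x => ∫⁻ y, F y * H (x - y) ∂μ := fun {F H} hF hH =>
        Measurable.lintegral_prod_right' (f := fun p : G × G => F p.2 * H (p.1 - p.2))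
          (by fun_prop)
      have h₁ : Measurable fun x => W x * ∫⁻ y, B y * U y * V (x - y) ∂μ :=
        hW.mul (hconv (hB.mul hU) hV)
      have h₂ : Measurable fun x => W x * ∫⁻ y, B y * V y * U (x - y) ∂μ :=
        hW.mul (hconv (hB.mul hV) hU)
      rw [lintegral_add_left (h₁.const_mul K), lintegral_const_mul _ h₁,
        lintegral_const_mul _ h₂]
    _ ≤ K * ((∫⁻ y, B y * U y ∂μ) * (eLpNorm W 2 μ * eLpNorm V 2 μ)) +
          K * ((∫⁻ y, B y * V y ∂μ) * (eLpNorm W 2 μ * eLpNorm U 2 μ)) := by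
      gcongr
      · exact lintegral_mul_lintegral_mul_comp_sub_le (hB.mul hU) hW hV
      · exact lintegral_mul_lintegral_mul_comp_sub_le (hB.mul hV) hW hU
    _ ≤ K * ((eLpNorm B 2 μ * eLpNorm U 2 μ) * (eLpNorm W 2 μ * eLpNorm V 2 μ)) +
          K * ((eLpNorm B 2 μ * eLpNorm V 2 μ) * (eLpNorm W 2 μ * eLpNorm U 2 μ)) := by
      gcongr
      · exact lintegral_mul_le_eLpNorm_two_mul hB.aemeasurable hU.aemeasurable
      · exact lintegral_mul_le_eLpNorm_two_mul hB.aemeasurable hV.aemeasurable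
    _ = 2 * K * eLpNorm B 2 μ * (eLpNorm U 2 μ * (eLpNorm V 2 μ * eLpNorm W 2 μ)) := by ring

end Convolution

section HaarScaling

variable {E : Type*} [NormedAddCommGroup E] [NormedSpace ℝ E] [MeasurableSpace E] [BorelSpace E]
  [FiniteDimensional ℝ E] (μ : Measure E) [μ.IsAddHaarMeasure]

lemma eLpNorm_comp_smul {F : Type*} [NormedAddCommGroup F] {f : E → F}
    (hf : AEStronglyMeasurable f μ) {p : ℝ≥0∞} (hp : p ≠ ∞) {R : ℝ} (hR : R ≠ 0) :
    eLpNorm (fun x => f (R • x)) p μ =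
      ENNReal.ofReal |(R ^ Module.finrank ℝ E)⁻¹| ^ (1 / p).toReal * eLpNorm f p μ := by
  have hmap := Measure.map_addHaar_smul μ hR
  rw [← Function.comp_def, ← eLpNorm_map_measure (hmap ▸ hf.smul_measure _)
    (measurable_const_smul R).aemeasurable, hmap, eLpNorm_smul_measure_of_ne_top hp, smul_eq_mul]

end HaarScaling

section JapaneseBracket

variable {E : Type*}

/-- `⟨h x⟩ ^ s`, where `⟨ξ⟩ = (1 + ‖ξ‖ ^ 2) ^ (1 / 2)`. -/
noncomputable def japaneseRpow [Norm E] (h s : ℝ) (x : E) : ℝ := (1 + h ^ 2 * ‖x‖ ^ 2) ^ (s / 2)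

lemma japaneseRpow_pos [Norm E] (h s : ℝ) (x : E) : 0 < japaneseRpow h s x :=
  Real.rpow_pos_of_pos (by positivity) _

section SeminormedAddGroup

variable [SeminormedAddGroup E]

lemma japaneseRpow_mul_japaneseRpow_neg_mul_le {s : ℝ} (hs : 0 ≤ s) (h : ℝ) (x y : E) :
    japaneseRpow h s x * (japaneseRpow h (-s) y * japaneseRpow h (-s) (x - y)) ≤
      4 ^ (s / 2) * (japaneseRpow h (-s) y + japaneseRpow h (-s) (x - y)) := by
  simp only [japaneseRpow, neg_div]
  exact rpow_mul_rpow_neg_mul_rpow_neg_le (by positivity) (by positivity) (by positivity)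
    (one_add_sq_mul_norm_sq_le h x y) (by positivity)

lemma enorm_japaneseRpow_mul_enorm_japaneseRpow_neg_mul_le {s : ℝ} (hs : 0 ≤ s) (h : ℝ)
    (x y : E) :
    ‖japaneseRpow h s x‖ₑ * (‖japaneseRpow h (-s) y‖ₑ * ‖japaneseRpow h (-s) (x - y)‖ₑ) ≤
      ENNReal.ofReal (4 ^ (s / 2)) *
        (‖japaneseRpow h (-s) y‖ₑ + ‖japaneseRpow h (-s) (x - y)‖ₑ) := by
  simp only [Real.enorm_eq_ofReal (japaneseRpow_pos h _ _).le]
  rw [← ENNReal.ofReal_mul (japaneseRpow_pos h _ _).le,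
    ← ENNReal.ofReal_mul (japaneseRpow_pos h _ _).le,
    ← ENNReal.ofReal_add (japaneseRpow_pos h _ _).le (japaneseRpow_pos h _ _).le,
    ← ENNReal.ofReal_mul (by positivity)]
  exact ENNReal.ofReal_le_ofReal (japaneseRpow_mul_japaneseRpow_neg_mul_le hs h x y)

lemma continuous_japaneseRpow (h s : ℝ) : Continuous (japaneseRpow (E := E) h s) :=
  (by fun_prop : Continuous fun x : E => 1 + h ^ 2 * ‖x‖ ^ 2).rpow_const
    fun _ => Or.inl (by positivity)

lemma eLpNorm_japaneseRpow_ne_zero [MeasurableSpace E] [OpensMeasurableSpace E] (μ : Measure E)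
    [NeZero μ] (h s : ℝ) : eLpNorm (japaneseRpow h s) 2 μ ≠ 0 := by
  rw [Ne, eLpNorm_eq_zero_iff (continuous_japaneseRpow h s).aestronglyMeasurable two_ne_zero]
  intro h0
  obtain ⟨x, hx⟩ := h0.exists
  exact (japaneseRpow_pos h s x).ne' hx

end SeminormedAddGroup

variable [NormedAddCommGroup E] [NormedSpace ℝ E]

lemma japaneseRpow_eq_one_smul (h s : ℝ) (x : E) :
    japaneseRpow h s x = japaneseRpow 1 s (h • x) := by
  simp only [japaneseRpow, norm_smul, Real.norm_eq_abs, mul_pow, sq_abs, one_pow, one_mul]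

variable [MeasurableSpace E] [BorelSpace E] [FiniteDimensional ℝ E] (μ : Measure E)
  [μ.IsAddHaarMeasure]

lemma memLp_japaneseRpow_neg {s : ℝ} (hs : Module.finrank ℝ E < 2 * s) :
    MemLp (japaneseRpow 1 (-s)) 2 μ := by
  rw [memLp_two_iff_integrable_sq (continuous_japaneseRpow 1 (-s)).aestronglyMeasurable]
  refine (integrable_rpow_neg_one_add_norm_sq hs).congr (ae_of_all _ fun x => ?_)
  simp only [japaneseRpow, one_pow, one_mul]
  rw [← Real.rpow_mul_natCast (by positivity)]
  congr 1
  push_cast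
  ring

lemma eLpNorm_japaneseRpow {h : ℝ} (hh : 0 < h) (s : ℝ) :
    eLpNorm (japaneseRpow h s) 2 μ =
      ENNReal.ofReal (h ^ (-(Module.finrank ℝ E : ℝ) / 2)) * eLpNorm (japaneseRpow 1 s) 2 μ := by
  rw [funext (japaneseRpow_eq_one_smul h s), eLpNorm_comp_smul μ
    (continuous_japaneseRpow 1 s).aestronglyMeasurable (by norm_num) hh.ne']
  congr 1
  rw [abs_of_pos (by positivity), ENNReal.ofReal_rpow_of_nonneg (by positivity) (by norm_num),
    ← Real.rpow_natCast, ← Real.rpow_neg hh.le, ← Real.rpow_mul hh.le]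
  norm_num
  ring_nf

end JapaneseBracket

/-- the key convolution estimate
`∫ ⟨hξ⟩^s w(ξ) ((⟨h·⟩^{-s}ũ) * (⟨h·⟩^{-s}ṽ))(ξ) dξ ≤ C h^{-n/2} ‖ũ‖₂ ‖ṽ‖₂ ‖w‖₂`
for nonnegative `ũ, ṽ, w ∈ L²(ℝⁿ)`, where `⟨ξ⟩ = (1+|ξ|²)^{1/2}`. -/
theorem stmt2 (n : ℕ) (s : ℝ) (hs : (n : ℝ) / 2 < s) :
    ∃ C : ℝ, 0 < C ∧ ∀ h : ℝ, h ∈ Set.Ioc (0 : ℝ) 1 →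
      ∀ u v w : EuclideanSpace ℝ (Fin n) → ℝ,
        Measurable u → Measurable v → Measurable w →
        (∀ x, 0 ≤ u x) → (∀ x, 0 ≤ v x) → (∀ x, 0 ≤ w x) →
        MemLp u 2 volume → MemLp v 2 volume → MemLp w 2 volume →
        (∫⁻ ξ, ENNReal.ofReal ((1 + h ^ 2 * ‖ξ‖ ^ 2) ^ (s / 2) * w ξ) *
            ∫⁻ y, ENNReal.ofReal ((1 + h ^ 2 * ‖y‖ ^ 2) ^ (-s / 2) * u y *
              ((1 + h ^ 2 * ‖ξ - y‖ ^ 2) ^ (-s / 2) * v (ξ - y))))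
          ≤ ENNReal.ofReal (C * h ^ (-(n : ℝ) / 2)) *
            (eLpNorm u 2 volume * (eLpNorm v 2 volume * eLpNorm w 2 volume)) := by
  have hs₀ : 0 ≤ s := (by positivity : (0 : ℝ) ≤ n / 2).trans hs.le
  have hψ : MemLp (japaneseRpow (E := EuclideanSpace ℝ (Fin n)) 1 (-s)) 2 volume :=
    memLp_japaneseRpow_neg volume (by rw [finrank_euclideanSpace_fin]; linarith)
  set c₀ := (eLpNorm (japaneseRpow (E := EuclideanSpace ℝ (Fin n)) 1 (-s)) 2 volume).toReal
  have hc₀ : 0 < c₀ :=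
    ENNReal.toReal_pos (eLpNorm_japaneseRpow_ne_zero volume 1 (-s)) hψ.eLpNorm_ne_top
  refine ⟨2 * 4 ^ (s / 2) * c₀, by positivity, ?_⟩
  rintro h ⟨hh, -⟩ u v w hu hv hw - - - - - -
  calc _ ≤ ∫⁻ ξ, ‖japaneseRpow h s ξ‖ₑ * ‖w ξ‖ₑ * ∫⁻ y, ‖japaneseRpow h (-s) y‖ₑ * ‖u y‖ₑ *
          (‖japaneseRpow h (-s) (ξ - y)‖ₑ * ‖v (ξ - y)‖ₑ) :=
        lintegral_mono fun ξ =>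
          mul_le_mul' ((Real.ofReal_le_enorm _).trans_eq (enorm_mul _ _)) (lintegral_mono fun y =>
            (Real.ofReal_le_enorm _).trans_eq (by simp only [enorm_mul]; rfl))
    _ ≤ 2 * ENNReal.ofReal (4 ^ (s / 2)) * eLpNorm (‖japaneseRpow h (-s) ·‖ₑ) 2 volume *
          (eLpNorm (‖u ·‖ₑ) 2 volume * (eLpNorm (‖v ·‖ₑ) 2 volume * eLpNorm (‖w ·‖ₑ) 2 volume)) :=
        lintegral_weighted_convolution_le (continuous_japaneseRpow h (-s)).measurable.enorm
          hu.enorm hv.enorm hw.enorm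
          (enorm_japaneseRpow_mul_enorm_japaneseRpow_neg_mul_le hs₀ h)
    _ = ENNReal.ofReal (2 * 4 ^ (s / 2) * c₀ * h ^ (-(n : ℝ) / 2)) *
          (eLpNorm u 2 volume * (eLpNorm v 2 volume * eLpNorm w 2 volume)) := by
        simp only [eLpNorm_enorm]
        rw [eLpNorm_japaneseRpow volume hh, finrank_euclideanSpace_fin,
          ← ENNReal.ofReal_toReal hψ.eLpNorm_ne_top, ENNReal.ofReal_mul (by positivity),
          ENNReal.ofReal_mul (by positivity), ENNReal.ofReal_mul (by positivity),
          ENNReal.ofReal_ofNat]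
        ring
end

section
/- Let P be an N×N (or more generally invertible bounded) operator and suppose the block operator 𝓟 = [[P, R₋],[R₊, 0]] : H × ℂ^N → H × ℂ^N is bijective with bounded inverse 𝓔 = [[E, E₊],[E₋, E₋₊]]. If P is invertible then E₋₊ is invertible, P^{-1} = E − E₊ E₋₊^{-1} E₋ and E₋₊^{-1} = −R₊ P^{-1} R₋; moreover for 1 ≤ k ≤ N the increasing singular values satisfy t_k(P) ≤ ‖R₋‖ ‖R₊‖ t_k(E₋₊). -/
/-!
Setting `v = 0` in the equations of the inverse gives `R₊ E₊ = 1` and `P E₊ = -R₋ E₋₊`; together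
with `P⁻¹` these give the Schur complement identities. For the singular values, `E₊` maps each
`k`-dimensional subspace `L` of `ℂ^N` injectively into `H`, and on `L` we have
`‖P E₊ y‖ ≤ ‖R₋‖ ‖E₋₊ y‖` and `‖y‖ ≤ ‖R₊‖ ‖E₊ y‖`. Hence the supremum of `‖P x‖` over unit vectors
of `E₊ L` is at most `‖R₋‖ ‖R₊‖` times that of `‖E₋₊ y‖` over unit vectors of `L`, and taking
infima over `L` in the min-max formula gives `t_k(P) ≤ ‖R₋‖ ‖R₊‖ t_k(E₋₊)`.
-/

open Module

/-- The `k`-th smallest singular value of a bounded operator `P` on a Hilbert space,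
via the min-max characterization
`t_k(P) = inf_{dim L = k} sup_{x ∈ L, ‖x‖=1} ‖P x‖`
(this agrees with the increasing rearrangement of the eigenvalues of `(P*P)^{1/2}`
below the essential spectrum, padded by its infimum; for an `N×N` matrix,
`t_j = s_{N+1-j}`). -/
noncomputable def tVal {H : Type*} [NormedAddCommGroup H] [InnerProductSpace ℂ H]
    (P : H →L[ℂ] H) (k : ℕ) : ℝ :=
  sInf {r : ℝ | ∃ L : Submodule ℂ H, Module.finrank ℂ L = k ∧
    r = sSup ((fun x => ‖P x‖) '' {x : H | x ∈ L ∧ ‖x‖ = 1})}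

namespace Grushin

variable {R H V : Type*} [Ring R] [AddCommGroup H] [Module R H] [AddCommGroup V]
  [Module R V] {P Pinv E : H →ₗ[R] H} {Rp : H →ₗ[R] V} {Rm Ep : V →ₗ[R] H}
  {Em : H →ₗ[R] V} {Emp : V →ₗ[R] V}

theorem rp_ep_apply (h4 : ∀ v vp, Rp (E v + Ep vp) = vp) (y : V) : Rp (Ep y) = y := by
  simpa using h4 0 y

theorem p_ep_apply (h3 : ∀ v vp, P (E v + Ep vp) + Rm (Em v + Emp vp) = v) (y : V) :
    P (Ep y) = -Rm (Emp y) :=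
  eq_neg_of_add_eq_zero_left (by simpa using h3 0 y)

theorem neg_rp_pinv_rm_emp_apply (h3 : ∀ v vp, P (E v + Ep vp) + Rm (Em v + Emp vp) = v)
    (h4 : ∀ v vp, Rp (E v + Ep vp) = vp) (hPinv : ∀ u, Pinv (P u) = u) (w : V) :
    -Rp (Pinv (Rm (Emp w))) = w := by
  rw [← neg_neg (Rm (Emp w)), ← p_ep_apply h3, map_neg, hPinv, map_neg, neg_neg,
    rp_ep_apply h4]

theorem emp_neg_rp_pinv_rm_apply (h2 : ∀ u um, Em (P u + Rm um) + Emp (Rp u) = um)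
    (hPinv : ∀ v, P (Pinv v) = v) (w : V) : Emp (-Rp (Pinv (Rm w))) = w := by
  simpa [hPinv] using h2 (-Pinv (Rm w)) w

theorem pinv_eq_e_sub_ep (h2 : ∀ u um, Em (P u + Rm um) + Emp (Rp u) = um)
    (h3 : ∀ v vp, P (E v + Ep vp) + Rm (Em v + Emp vp) = v)
    (hPinv₁ : ∀ u, Pinv (P u) = u) (hPinv₂ : ∀ v, P (Pinv v) = v) (v : H) :
    Pinv v = E v - Ep (-Rp (Pinv (Rm (Em v)))) := by
  set w := -Rp (Pinv (Rm (Em v)))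
  have hEmp : Emp (-w) = -Em v := by rw [map_neg, emp_neg_rp_pinv_rm_apply h2 hPinv₂]
  have hsolve := h3 v (-w)
  rw [hEmp, add_neg_cancel, map_zero, add_zero] at hsolve
  calc Pinv v = Pinv (P (E v + Ep (-w))) := by rw [hsolve]
    _ = E v - Ep w := by rw [hPinv₁, map_neg, sub_eq_add_neg]

end Grushin

theorem exists_submodule_finrank_eq {K M : Type*} [Field K] [AddCommGroup M] [Module K M]
    {k : ℕ} (hk : k ≤ finrank K M) : ∃ L : Submodule K M, finrank K L = k := by
  obtain ⟨f, hf⟩ := exists_linearIndependent_of_le_finrank hk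
  exact ⟨Submodule.span K (Set.range f), by rw [finrank_span_eq_card hf, Fintype.card_fin]⟩

section SingularValues

variable {H K : Type*} [NormedAddCommGroup H] [InnerProductSpace ℂ H] [NormedAddCommGroup K]
  [InnerProductSpace ℂ K]

noncomputable def unitSphereSup (P : H →L[ℂ] H) (L : Submodule ℂ H) : ℝ :=
  sSup ((fun x => ‖P x‖) '' {x : H | x ∈ L ∧ ‖x‖ = 1})

theorem tVal_eq_sInf_unitSphereSup (P : H →L[ℂ] H) (k : ℕ) :
    tVal P k = sInf {r | ∃ L : Submodule ℂ H, finrank ℂ L = k ∧ r = unitSphereSup P L} :=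
  rfl

theorem unitSphereSup_nonneg (P : H →L[ℂ] H) (L : Submodule ℂ H) : 0 ≤ unitSphereSup P L :=
  Real.sSup_nonneg (by rintro _ ⟨x, _, rfl⟩; exact norm_nonneg _)

theorem unitSphereSup_le {P : H →L[ℂ] H} {L : Submodule ℂ H} {C : ℝ} (hC : 0 ≤ C)
    (h : ∀ x ∈ L, ‖P x‖ ≤ C * ‖x‖) : unitSphereSup P L ≤ C := by
  refine Real.sSup_le ?_ hC
  rintro _ ⟨x, ⟨hxL, hx1⟩, rfl⟩
  simpa [hx1] using h x hxL

theorem norm_apply_le_unitSphereSup_mul (P : H →L[ℂ] H) {L : Submodule ℂ H} {x : H}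
    (hx : x ∈ L) : ‖P x‖ ≤ unitSphereSup P L * ‖x‖ := by
  rcases eq_or_ne x 0 with rfl | hx0
  · simp
  have hbdd : BddAbove ((fun x => ‖P x‖) '' {x : H | x ∈ L ∧ ‖x‖ = 1}) := by
    refine ⟨‖P‖, ?_⟩
    rintro _ ⟨z, ⟨-, hz1⟩, rfl⟩
    simpa [hz1] using P.le_opNorm z
  have hunit : ‖(‖x‖⁻¹ : ℂ) • x‖ = 1 := by
    simp [norm_smul, norm_ne_zero_iff.mpr hx0]
  have hle : ‖P ((‖x‖⁻¹ : ℂ) • x)‖ ≤ unitSphereSup P L :=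
    le_csSup hbdd ⟨_, ⟨L.smul_mem _ hx, hunit⟩, rfl⟩
  rw [map_smul, norm_smul, norm_inv, Complex.norm_real, norm_norm] at hle
  rwa [inv_mul_le_iff₀ (norm_pos_iff.mpr hx0), mul_comm] at hle

theorem unitSphereSup_map_le {P : H →L[ℂ] H} {Q : K →L[ℂ] K} {J : K →ₗ[ℂ] H} {a b : ℝ}
    (ha : 0 ≤ a) (hb : 0 ≤ b) (hJ : ∀ y, ‖y‖ ≤ b * ‖J y‖)
    (hPJ : ∀ y, ‖P (J y)‖ ≤ a * ‖Q y‖) (L : Submodule ℂ K) :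
    unitSphereSup P (L.map J) ≤ a * b * unitSphereSup Q L := by
  have hQ := unitSphereSup_nonneg Q L
  refine unitSphereSup_le (by positivity) ?_
  rintro _ ⟨y, hyL, rfl⟩
  calc ‖P (J y)‖ ≤ a * ‖Q y‖ := hPJ y
    _ ≤ a * (unitSphereSup Q L * ‖y‖) := by
        gcongr; exact norm_apply_le_unitSphereSup_mul Q hyL
    _ ≤ a * (unitSphereSup Q L * (b * ‖J y‖)) := by gcongr; exact hJ y
    _ = a * b * unitSphereSup Q L * ‖J y‖ := by ring

theorem tVal_le_mul_tVal [FiniteDimensional ℂ K] {P : H →L[ℂ] H} {Q : K →L[ℂ] K}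
    {J : K →ₗ[ℂ] H} {a b : ℝ} (ha : 0 ≤ a) (hb : 0 ≤ b) (hJ : ∀ y, ‖y‖ ≤ b * ‖J y‖)
    (hPJ : ∀ y, ‖P (J y)‖ ≤ a * ‖Q y‖) {k : ℕ} (hk : k ≤ finrank ℂ K) :
    tVal P k ≤ a * b * tVal Q k := by
  have hJinj : Function.Injective J := by
    refine (injective_iff_map_eq_zero J).mpr fun y hy => norm_le_zero_iff.mp ?_
    simpa [hy] using hJ y
  obtain ⟨L₀, hL₀⟩ := exists_submodule_finrank_eq hk
  rw [tVal_eq_sInf_unitSphereSup, tVal_eq_sInf_unitSphereSup, ← smul_eq_mul (a * b),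
    ← Real.sInf_smul_of_nonneg (mul_nonneg ha hb)]
  refine le_csInf (Set.Nonempty.smul_set ⟨_, L₀, hL₀, rfl⟩) ?_
  rintro _ ⟨_, ⟨L, hL, rfl⟩, rfl⟩
  have hmap : finrank ℂ (L.map J) = k :=
    hL ▸ (Submodule.equivMapOfInjective J hJinj L).finrank_eq.symm
  calc sInf {r | ∃ L : Submodule ℂ H, finrank ℂ L = k ∧ r = unitSphereSup P L}
        ≤ unitSphereSup P (L.map J) :=
        csInf_le ⟨0, by rintro _ ⟨L', -, rfl⟩; exact unitSphereSup_nonneg P L'⟩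
          ⟨_, hmap, rfl⟩
    _ ≤ a * b * unitSphereSup Q L := unitSphereSup_map_le ha hb hJ hPJ L

end SingularValues

theorem stmt12_general {H : Type*} [NormedAddCommGroup H] [InnerProductSpace ℂ H]
    (N : ℕ) (P Pinv : H →L[ℂ] H)
    (Rp : H →L[ℂ] EuclideanSpace ℂ (Fin N)) (Rm : EuclideanSpace ℂ (Fin N) →L[ℂ] H)
    (E : H →L[ℂ] H) (Ep : EuclideanSpace ℂ (Fin N) →L[ℂ] H)
    (Em : H →L[ℂ] EuclideanSpace ℂ (Fin N))
    (Emp : EuclideanSpace ℂ (Fin N) →L[ℂ] EuclideanSpace ℂ (Fin N))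
    (h2 : ∀ u um, Em (P u + Rm um) + Emp (Rp u) = um)
    (h3 : ∀ v vp, P (E v + Ep vp) + Rm (Em v + Emp vp) = v)
    (h4 : ∀ v vp, Rp (E v + Ep vp) = vp)
    (hPinv1 : ∀ u, Pinv (P u) = u) (hPinv2 : ∀ v, P (Pinv v) = v) :
    (∀ w, (-(Rp.comp (Pinv.comp Rm))) (Emp w) = w) ∧
    (∀ w, Emp ((-(Rp.comp (Pinv.comp Rm))) w) = w) ∧
    (∀ v, Pinv v = E v - Ep ((-(Rp.comp (Pinv.comp Rm))) (Em v))) ∧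
    (∀ k : ℕ, 1 ≤ k → k ≤ N → tVal P k ≤ ‖Rm‖ * ‖Rp‖ * tVal Emp k) := by
  refine ⟨Grushin.neg_rp_pinv_rm_emp_apply h3 h4 hPinv1,
    Grushin.emp_neg_rp_pinv_rm_apply h2 hPinv2,
    Grushin.pinv_eq_e_sub_ep h2 h3 hPinv1 hPinv2,
    fun k _ hkN => tVal_le_mul_tVal (J := Ep.toLinearMap) (norm_nonneg Rm) (norm_nonneg Rp)
      (fun y => ?_) (fun y => ?_) (by simpa using hkN)⟩
  · calc ‖y‖ = ‖Rp (Ep y)‖ := congrArg norm (Grushin.rp_ep_apply h4 y).symm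
      _ ≤ ‖Rp‖ * ‖Ep y‖ := Rp.le_opNorm _
  · calc ‖P (Ep y)‖ = ‖Rm (Emp y)‖ :=
          (congrArg norm (Grushin.p_ep_apply h3 y)).trans (norm_neg _)
      _ ≤ ‖Rm‖ * ‖Emp y‖ := Rm.le_opNorm _

/-- for a well-posed Grushin problem
`𝓟 = [[P, R₋],[R₊, 0]]` with inverse `[[E, E₊],[E₋, E₋₊]]`, if `P` is invertible
then `E₋₊` is invertible with `E₋₊⁻¹ = −R₊ P⁻¹ R₋`, `P⁻¹ = E − E₊ E₋₊⁻¹ E₋`, and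
`t_k(P) ≤ ‖R₋‖ ‖R₊‖ t_k(E₋₊)` for `1 ≤ k ≤ N`. -/
theorem stmt12 {H : Type*} [NormedAddCommGroup H] [InnerProductSpace ℂ H] [CompleteSpace H]
    (N : ℕ) (P Pinv : H →L[ℂ] H)
    (Rp : H →L[ℂ] EuclideanSpace ℂ (Fin N)) (Rm : EuclideanSpace ℂ (Fin N) →L[ℂ] H)
    (E : H →L[ℂ] H) (Ep : EuclideanSpace ℂ (Fin N) →L[ℂ] H)
    (Em : H →L[ℂ] EuclideanSpace ℂ (Fin N))
    (Emp : EuclideanSpace ℂ (Fin N) →L[ℂ] EuclideanSpace ℂ (Fin N))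
    (h1 : ∀ u um, E (P u + Rm um) + Ep (Rp u) = u)
    (h2 : ∀ u um, Em (P u + Rm um) + Emp (Rp u) = um)
    (h3 : ∀ v vp, P (E v + Ep vp) + Rm (Em v + Emp vp) = v)
    (h4 : ∀ v vp, Rp (E v + Ep vp) = vp)
    (hPinv1 : ∀ u, Pinv (P u) = u) (hPinv2 : ∀ v, P (Pinv v) = v) :
    (∀ w, (-(Rp.comp (Pinv.comp Rm))) (Emp w) = w) ∧
    (∀ w, Emp ((-(Rp.comp (Pinv.comp Rm))) w) = w) ∧
    (∀ v, Pinv v = E v - Ep ((-(Rp.comp (Pinv.comp Rm))) (Em v))) ∧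
    (∀ k : ℕ, 1 ≤ k → k ≤ N → tVal P k ≤ ‖Rm‖ * ‖Rp‖ * tVal Emp k) :=
  stmt12_general N P Pinv Rp Rm E Ep Em Emp h2 h3 h4 hPinv1 hPinv2
end

section
/- In the setting of a well-posed Grushin problem 𝓟 = [[P, R₋],[R₊, 0]] with inverse [[E, E₊],[E₋, E₋₊]] and E₋₊ an N×N matrix, one has for 1 ≤ k ≤ N: t_k(P) ≥ t_k(E₋₊) / (‖E‖ t_k(E₋₊) + ‖E₊‖ ‖E₋‖). -/
open Module

theorem ContinuousLinearMap.sSup_norm_image_unit_mem_eq_norm_comp_subtypeL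
    {𝕜 V W : Type*} [RCLike 𝕜] [NormedAddCommGroup V] [NormedSpace 𝕜 V]
    [NormedAddCommGroup W] [NormedSpace 𝕜 W] (T : V →L[𝕜] W) (L : Submodule 𝕜 V) :
    sSup ((fun x => ‖T x‖) '' {x | x ∈ L ∧ ‖x‖ = 1}) = ‖T.comp L.subtypeL‖ := by
  rw [← (T.comp L.subtypeL).sSup_sphere_eq_norm]
  congr 1
  ext r
  constructor
  · rintro ⟨x, ⟨hxL, hx⟩, rfl⟩
    exact ⟨⟨x, hxL⟩, by simpa using hx, rfl⟩
  · rintro ⟨x, hx, rfl⟩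
    exact ⟨x, ⟨x.2, by simpa using hx⟩, rfl⟩

theorem Submodule.exists_finrank_eq_of_injective {K M M' : Type*} [DivisionRing K]
    [AddCommGroup M] [Module K M] [AddCommGroup M'] [Module K M'] {f : M →ₗ[K] M'}
    (hf : Function.Injective f) {k : ℕ} (hk : k ≤ finrank K M) :
    ∃ L : Submodule K M', finrank K L = k := by
  obtain ⟨v, hv⟩ := exists_linearIndependent_of_le_finrank hk
  exact ⟨span K (Set.range (f ∘ v)),
    by rw [finrank_span_eq_card (hv.map' f (LinearMap.ker_eq_bot.mpr hf)), Fintype.card_fin]⟩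

section SingularValue

variable {H : Type*} [NormedAddCommGroup H] [InnerProductSpace ℂ H]

theorem tVal_eq_sInf_norm_comp_subtypeL (T : H →L[ℂ] H) (k : ℕ) :
    tVal T k = sInf {r | ∃ L : Submodule ℂ H, finrank ℂ L = k ∧ r = ‖T.comp L.subtypeL‖} := by
  simp only [tVal, ContinuousLinearMap.sSup_norm_image_unit_mem_eq_norm_comp_subtypeL]

theorem tVal_nonneg (T : H →L[ℂ] H) (k : ℕ) : 0 ≤ tVal T k := by
  rw [tVal_eq_sInf_norm_comp_subtypeL]
  exact Real.sInf_nonneg (by rintro _ ⟨L, -, rfl⟩; exact norm_nonneg (T.comp L.subtypeL))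

theorem tVal_le_norm_comp_subtypeL (T : H →L[ℂ] H) {L : Submodule ℂ H} {k : ℕ}
    (hL : finrank ℂ L = k) : tVal T k ≤ ‖T.comp L.subtypeL‖ := by
  rw [tVal_eq_sInf_norm_comp_subtypeL]
  exact csInf_le ⟨0, by rintro _ ⟨L, -, rfl⟩; exact norm_nonneg (T.comp L.subtypeL)⟩ ⟨L, hL, rfl⟩

theorem le_tVal (T : H →L[ℂ] H) {k : ℕ} {a : ℝ} (hk : ∃ L : Submodule ℂ H, finrank ℂ L = k)
    (h : ∀ L : Submodule ℂ H, finrank ℂ L = k → a ≤ ‖T.comp L.subtypeL‖) : a ≤ tVal T k := by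
  rw [tVal_eq_sInf_norm_comp_subtypeL]
  obtain ⟨L, hL⟩ := hk
  exact le_csInf ⟨_, L, hL, rfl⟩ (by rintro _ ⟨L, hL, rfl⟩; exact h L hL)

end SingularValue

section Grushin

variable {𝕜 V F : Type*} [NontriviallyNormedField 𝕜] [NormedAddCommGroup V] [NormedSpace 𝕜 V]
  [NormedAddCommGroup F] [NormedSpace 𝕜 F]
  {P E : V →L[𝕜] V} {Rp Em : V →L[𝕜] F} {Ep : F →L[𝕜] V} {Emp : F →L[𝕜] F}

theorem norm_le_of_left_inverse (hEP : ∀ u, E (P u) + Ep (Rp u) = u) (u : V) :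
    ‖u‖ ≤ ‖E‖ * ‖P u‖ + ‖Ep‖ * ‖Rp u‖ :=
  calc ‖u‖ = ‖E (P u) + Ep (Rp u)‖ := by rw [hEP]
    _ ≤ ‖E (P u)‖ + ‖Ep (Rp u)‖ := norm_add_le _ _
    _ ≤ ‖E‖ * ‖P u‖ + ‖Ep‖ * ‖Rp u‖ := add_le_add (E.le_opNorm _) (Ep.le_opNorm _)

theorem norm_apply_apply_le_of_left_inverse (hEmP : ∀ u, Em (P u) + Emp (Rp u) = 0) (u : V) :
    ‖Emp (Rp u)‖ ≤ ‖Em‖ * ‖P u‖ := by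
  rw [eq_neg_of_add_eq_zero_right (hEmP u), norm_neg]
  exact Em.le_opNorm _

variable (hEP : ∀ u, E (P u) + Ep (Rp u) = u) {L : Submodule 𝕜 V}
include hEP

theorem one_sub_mul_norm_le_of_left_inverse (x : L) :
    (1 - ‖E‖ * ‖P.comp L.subtypeL‖) * ‖x‖ ≤ ‖Ep‖ * ‖Rp x‖ := by
  have hPx : ‖P x‖ ≤ ‖P.comp L.subtypeL‖ * ‖x‖ := (P.comp L.subtypeL).le_opNorm x
  have hx : ‖x‖ ≤ ‖E‖ * ‖P x‖ + ‖Ep‖ * ‖Rp x‖ := norm_le_of_left_inverse hEP x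
  nlinarith [norm_nonneg E]

theorem injective_comp_subtype_of_mul_norm_lt_one (hs : ‖E‖ * ‖P.comp L.subtypeL‖ < 1) :
    Function.Injective ((Rp : V →ₗ[𝕜] F) ∘ₗ L.subtype) := by
  refine (injective_iff_map_eq_zero _).mpr fun x hx => norm_le_zero_iff.mp ?_
  have := one_sub_mul_norm_le_of_left_inverse hEP x
  rw [show Rp x = 0 from hx, norm_zero, mul_zero] at this
  nlinarith [norm_nonneg x]

theorem norm_comp_subtypeL_range_le (hEmP : ∀ u, Em (P u) + Emp (Rp u) = 0)
    (hs : ‖E‖ * ‖P.comp L.subtypeL‖ < 1) :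
    ‖Emp.comp (LinearMap.range ((Rp : V →ₗ[𝕜] F) ∘ₗ L.subtype)).subtypeL‖
      ≤ ‖Em‖ * ‖Ep‖ * ‖P.comp L.subtypeL‖ / (1 - ‖E‖ * ‖P.comp L.subtypeL‖) := by
  have hPx (x : L) : ‖P x‖ ≤ ‖P.comp L.subtypeL‖ * ‖x‖ := (P.comp L.subtypeL).le_opNorm x
  set s := ‖P.comp L.subtypeL‖
  have hs0 : 0 ≤ s := norm_nonneg _
  have hd : 0 < 1 - ‖E‖ * s := by linarith
  refine ContinuousLinearMap.opNorm_le_bound _ (by positivity) ?_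
  rintro ⟨_, x, rfl⟩
  change ‖Emp (Rp x)‖ ≤ _ * ‖Rp x‖
  rw [div_mul_eq_mul_div, le_div_iff₀ hd]
  calc ‖Emp (Rp x)‖ * (1 - ‖E‖ * s) ≤ ‖Em‖ * (s * ‖x‖) * (1 - ‖E‖ * s) := by
        gcongr
        exact (norm_apply_apply_le_of_left_inverse hEmP (x : V)).trans (by gcongr; exact hPx x)
    _ = ‖Em‖ * s * ((1 - ‖E‖ * s) * ‖x‖) := by ring
    _ ≤ ‖Em‖ * s * (‖Ep‖ * ‖Rp x‖) :=
        mul_le_mul_of_nonneg_left (one_sub_mul_norm_le_of_left_inverse hEP x) (by positivity)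
    _ = ‖Em‖ * ‖Ep‖ * s * ‖Rp x‖ := by ring

end Grushin

theorem tVal_le_mul_of_left_inverse {H F : Type*} [NormedAddCommGroup H] [InnerProductSpace ℂ H]
    [NormedAddCommGroup F] [InnerProductSpace ℂ F]
    {P E : H →L[ℂ] H} {Rp Em : H →L[ℂ] F} {Ep : F →L[ℂ] H} {Emp : F →L[ℂ] F}
    (hEP : ∀ u, E (P u) + Ep (Rp u) = u) (hEmP : ∀ u, Em (P u) + Emp (Rp u) = 0)
    {L : Submodule ℂ H} {k : ℕ} (hL : finrank ℂ L = k) :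
    tVal Emp k ≤ ‖P.comp L.subtypeL‖ * (‖E‖ * tVal Emp k + ‖Ep‖ * ‖Em‖) := by
  set s := ‖P.comp L.subtypeL‖
  set t := tVal Emp k
  have ht : 0 ≤ t := tVal_nonneg Emp k
  have hs : 0 ≤ s := norm_nonneg (P.comp L.subtypeL)
  have hc : 0 ≤ ‖Ep‖ * ‖Em‖ := by positivity
  rcases lt_or_ge (‖E‖ * s) 1 with hEs | hEs
  · have hrange : finrank ℂ (LinearMap.range ((Rp : H →ₗ[ℂ] F) ∘ₗ L.subtype)) = k := by
      rw [LinearMap.finrank_range_of_inj (injective_comp_subtype_of_mul_norm_lt_one hEP hEs), hL]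
    have := (tVal_le_norm_comp_subtypeL Emp hrange).trans
      (norm_comp_subtypeL_range_le hEP hEmP hEs)
    rw [le_div_iff₀ (by linarith)] at this
    linarith
  · nlinarith [mul_nonneg hs hc]

theorem stmt13_general {H : Type*} [NormedAddCommGroup H] [InnerProductSpace ℂ H]
    (N : ℕ) (P : H →L[ℂ] H)
    (Rp : H →L[ℂ] EuclideanSpace ℂ (Fin N)) (Rm : EuclideanSpace ℂ (Fin N) →L[ℂ] H)
    (E : H →L[ℂ] H) (Ep : EuclideanSpace ℂ (Fin N) →L[ℂ] H)
    (Em : H →L[ℂ] EuclideanSpace ℂ (Fin N))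
    (Emp : EuclideanSpace ℂ (Fin N) →L[ℂ] EuclideanSpace ℂ (Fin N))
    (h1 : ∀ u um, E (P u + Rm um) + Ep (Rp u) = u)
    (h2 : ∀ u um, Em (P u + Rm um) + Emp (Rp u) = um)
    (h4 : ∀ v vp, Rp (E v + Ep vp) = vp) :
    ∀ k : ℕ, 1 ≤ k → k ≤ N →
      tVal Emp k / (‖E‖ * tVal Emp k + ‖Ep‖ * ‖Em‖) ≤ tVal P k := by
  intro k _ hkN
  have hEP : ∀ u, E (P u) + Ep (Rp u) = u := fun u => by simpa using h1 u 0
  have hEmP : ∀ u, Em (P u) + Emp (Rp u) = 0 := fun u => by simpa using h2 u 0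
  have hEp : Function.Injective Ep :=
    Function.LeftInverse.injective (g := Rp) fun v => by simpa using h4 0 v
  have hden : 0 ≤ ‖E‖ * tVal Emp k + ‖Ep‖ * ‖Em‖ := by
    have := tVal_nonneg Emp k
    positivity
  refine le_tVal P (Submodule.exists_finrank_eq_of_injective (f := Ep.toLinearMap) hEp
    (by rwa [finrank_euclideanSpace_fin])) fun L hL => ?_
  exact div_le_of_le_mul₀ hden (norm_nonneg (P.comp L.subtypeL))
    (tVal_le_mul_of_left_inverse hEP hEmP hL)

/-- for a well-posed Grushin problem `𝓟 = [[P, R₋],[R₊, 0]]` with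
inverse `[[E, E₊],[E₋, E₋₊]]` and `E₋₊` of size `N×N`, one has
`t_k(P) ≥ t_k(E₋₊) / (‖E‖ t_k(E₋₊) + ‖E₊‖ ‖E₋‖)` for `1 ≤ k ≤ N`. -/
theorem stmt13 {H : Type*} [NormedAddCommGroup H] [InnerProductSpace ℂ H] [CompleteSpace H]
    (N : ℕ) (P : H →L[ℂ] H)
    (Rp : H →L[ℂ] EuclideanSpace ℂ (Fin N)) (Rm : EuclideanSpace ℂ (Fin N) →L[ℂ] H)
    (E : H →L[ℂ] H) (Ep : EuclideanSpace ℂ (Fin N) →L[ℂ] H)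
    (Em : H →L[ℂ] EuclideanSpace ℂ (Fin N))
    (Emp : EuclideanSpace ℂ (Fin N) →L[ℂ] EuclideanSpace ℂ (Fin N))
    (h1 : ∀ u um, E (P u + Rm um) + Ep (Rp u) = u)
    (h2 : ∀ u um, Em (P u + Rm um) + Emp (Rp u) = um)
    (h3 : ∀ v vp, P (E v + Ep vp) + Rm (Em v + Emp vp) = v)
    (h4 : ∀ v vp, Rp (E v + Ep vp) = vp) :
    ∀ k : ℕ, 1 ≤ k → k ≤ N →
      tVal Emp k / (‖E‖ * tVal Emp k + ‖Ep‖ * ‖Em‖) ≤ tVal P k :=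
  stmt13_general N P Rp Rm E Ep Em Emp h1 h2 h4
end

section
/- Let P : H → H be a bounded operator on a separable Hilbert space such that P − 1 is of trace class, and suppose the Grushin operator 𝓟 = [[P, R₋],[R₊, 0]] : H × ℂ^N → H × ℂ^N is bijective with bounded inverse [[E, E₊],[E₋, E₋₊]]. Then 𝓟 is a trace-class perturbation of the identity and det P = det 𝓟 · det E₋₊ (Fredholm determinants on the left, finite determinant for E₋₊). -/
/-!
The second column of `𝓟 𝓟⁻¹ = 1` says `P E₊ + R₋ E₋₊ = 0` and `R₊ E₊ = 1`, so right-multiplying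
`𝓟` by the upper block-triangular map `[[1, E₊], [0, E₋₊]]` gives the lower block-triangular map
`[[P, 0], [R₊, 1]]`. Taking determinants of block-triangular maps yields
`det 𝓟 · det E₋₊ = det P`.
-/

namespace LinearMap

variable {R M₁ M₂ : Type*} [CommRing R] [AddCommGroup M₁] [AddCommGroup M₂]
  [Module R M₁] [Module R M₂]

theorem toMatrix_prod_eq_fromBlocks {ι κ : Type*} [Fintype ι] [Fintype κ]
    [DecidableEq ι] [DecidableEq κ] (v₁ : Module.Basis ι R M₁) (v₂ : Module.Basis κ R M₂)
    (A : M₁ →ₗ[R] M₁) (B : M₂ →ₗ[R] M₁) (C : M₁ →ₗ[R] M₂) (D : M₂ →ₗ[R] M₂)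
    (F : M₁ × M₂ →ₗ[R] M₁ × M₂) (hF : ∀ x y, F (x, y) = (A x + B y, C x + D y)) :
    toMatrix (v₁.prod v₂) (v₁.prod v₂) F =
      Matrix.fromBlocks (toMatrix v₁ v₁ A) (toMatrix v₂ v₁ B)
        (toMatrix v₁ v₂ C) (toMatrix v₂ v₂ D) := by
  ext (i | i) (j | j) <;> simp [toMatrix, hF]

variable [Module.Free R M₁] [Module.Free R M₂] [Module.Finite R M₁] [Module.Finite R M₂]

theorem det_of_blocks_zero₂₁ (A : M₁ →ₗ[R] M₁) (B : M₂ →ₗ[R] M₁) (D : M₂ →ₗ[R] M₂)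
    (F : M₁ × M₂ →ₗ[R] M₁ × M₂) (hF : ∀ x y, F (x, y) = (A x + B y, D y)) :
    F.det = A.det * D.det := by
  classical
  let v₁ := Module.Free.chooseBasis R M₁
  let v₂ := Module.Free.chooseBasis R M₂
  rw [← det_toMatrix (v₁.prod v₂), toMatrix_prod_eq_fromBlocks v₁ v₂ A B 0 D F (by simpa using hF),
    map_zero, Matrix.det_fromBlocks_zero₂₁, det_toMatrix, det_toMatrix]

theorem det_of_blocks_zero₁₂ (A : M₁ →ₗ[R] M₁) (C : M₁ →ₗ[R] M₂) (D : M₂ →ₗ[R] M₂)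
    (F : M₁ × M₂ →ₗ[R] M₁ × M₂) (hF : ∀ x y, F (x, y) = (A x, C x + D y)) :
    F.det = A.det * D.det := by
  classical
  let v₁ := Module.Free.chooseBasis R M₁
  let v₂ := Module.Free.chooseBasis R M₂
  rw [← det_toMatrix (v₁.prod v₂), toMatrix_prod_eq_fromBlocks v₁ v₂ A 0 C D F (by simpa using hF),
    map_zero, Matrix.det_fromBlocks_zero₁₂, det_toMatrix, det_toMatrix]

theorem det_eq_det_grushin_mul_det (P : M₁ →ₗ[R] M₁) (Rp : M₁ →ₗ[R] M₂) (Rm : M₂ →ₗ[R] M₁)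
    (Ep : M₂ →ₗ[R] M₁) (Emp : M₂ →ₗ[R] M₂) (hP : ∀ v, P (Ep v) + Rm (Emp v) = 0)
    (hR : ∀ v, Rp (Ep v) = v) (𝓟 : M₁ × M₂ →ₗ[R] M₁ × M₂)
    (h𝓟 : ∀ u um, 𝓟 (u, um) = (P u + Rm um, Rp u)) :
    P.det = 𝓟.det * Emp.det := by
  let M : M₁ × M₂ →ₗ[R] M₁ × M₂ := (fst R M₁ M₂ + Ep ∘ₗ snd R M₁ M₂).prod (Emp ∘ₗ snd R M₁ M₂)
  have hM : M.det = Emp.det := by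
    simpa using det_of_blocks_zero₂₁ id Ep Emp M fun x y ↦ rfl
  have h𝓟M : ∀ x y, (𝓟 ∘ₗ M) (x, y) = (P x, Rp x + y) := by
    intro x y
    rw [comp_apply, show M (x, y) = (x + Ep y, Emp y) from rfl, h𝓟, map_add, add_assoc, hP,
      add_zero, map_add, hR]
  rw [← hM, ← det_comp, det_of_blocks_zero₁₂ P Rp id _ h𝓟M, det_id, mul_one]

end LinearMap

theorem stmt14_general (m N : ℕ)
    (P : EuclideanSpace ℂ (Fin m) →L[ℂ] EuclideanSpace ℂ (Fin m))
    (Rp : EuclideanSpace ℂ (Fin m) →L[ℂ] EuclideanSpace ℂ (Fin N))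
    (Rm : EuclideanSpace ℂ (Fin N) →L[ℂ] EuclideanSpace ℂ (Fin m))
    (E : EuclideanSpace ℂ (Fin m) →L[ℂ] EuclideanSpace ℂ (Fin m))
    (Ep : EuclideanSpace ℂ (Fin N) →L[ℂ] EuclideanSpace ℂ (Fin m))
    (Em : EuclideanSpace ℂ (Fin m) →L[ℂ] EuclideanSpace ℂ (Fin N))
    (Emp : EuclideanSpace ℂ (Fin N) →L[ℂ] EuclideanSpace ℂ (Fin N))
    (h3 : ∀ v vp, P (E v + Ep vp) + Rm (Em v + Emp vp) = v)
    (h4 : ∀ v vp, Rp (E v + Ep vp) = vp)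
    (𝓟 : (EuclideanSpace ℂ (Fin m) × EuclideanSpace ℂ (Fin N)) →ₗ[ℂ]
         (EuclideanSpace ℂ (Fin m) × EuclideanSpace ℂ (Fin N)))
    (h𝓟 : ∀ u um, 𝓟 (u, um) = (P u + Rm um, Rp u)) :
    LinearMap.det P.toLinearMap = LinearMap.det 𝓟 * LinearMap.det Emp.toLinearMap :=
  LinearMap.det_eq_det_grushin_mul_det P.toLinearMap Rp Rm Ep Emp
    (fun vp ↦ by simpa using h3 0 vp) (fun vp ↦ by simpa using h4 0 vp) 𝓟 h𝓟

/-- `det P = det 𝓟 · det E₋₊` for a well-posed Grushin problem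
`𝓟 = [[P, R₋],[R₊, 0]]` with inverse `[[E, E₊],[E₋, E₋₊]]`.  (Formalized on a
finite-dimensional Hilbert space, where `P − 1` is automatically of trace class
and the Fredholm determinants are the usual determinants.) -/
theorem stmt14 (m N : ℕ)
    (P : EuclideanSpace ℂ (Fin m) →L[ℂ] EuclideanSpace ℂ (Fin m))
    (Rp : EuclideanSpace ℂ (Fin m) →L[ℂ] EuclideanSpace ℂ (Fin N))
    (Rm : EuclideanSpace ℂ (Fin N) →L[ℂ] EuclideanSpace ℂ (Fin m))
    (E : EuclideanSpace ℂ (Fin m) →L[ℂ] EuclideanSpace ℂ (Fin m))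
    (Ep : EuclideanSpace ℂ (Fin N) →L[ℂ] EuclideanSpace ℂ (Fin m))
    (Em : EuclideanSpace ℂ (Fin m) →L[ℂ] EuclideanSpace ℂ (Fin N))
    (Emp : EuclideanSpace ℂ (Fin N) →L[ℂ] EuclideanSpace ℂ (Fin N))
    (h1 : ∀ u um, E (P u + Rm um) + Ep (Rp u) = u)
    (h2 : ∀ u um, Em (P u + Rm um) + Emp (Rp u) = um)
    (h3 : ∀ v vp, P (E v + Ep vp) + Rm (Em v + Emp vp) = v)
    (h4 : ∀ v vp, Rp (E v + Ep vp) = vp)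
    (𝓟 : (EuclideanSpace ℂ (Fin m) × EuclideanSpace ℂ (Fin N)) →ₗ[ℂ]
         (EuclideanSpace ℂ (Fin m) × EuclideanSpace ℂ (Fin N)))
    (h𝓟 : ∀ u um, 𝓟 (u, um) = (P u + Rm um, Rp u)) :
    LinearMap.det P.toLinearMap = LinearMap.det 𝓟 * LinearMap.det Emp.toLinearMap :=
  stmt14_general m N P Rp Rm E Ep Em Emp h3 h4 𝓟 h𝓟
end

section
/- Let f be holomorphic in a disc D(0, 2r₀) (r₀ ≤ 1) with |f(w)| ≤ e^{A} on D(0,2r₀) and |f(0)| ≥ e^{−A} for some A ≥ 1. Let w₁,…,w_M be the zeros of f in D(0, 3r₀/2). Then f(w) = e^{g(w)} ∏_{j=1}^M (w − w_j) on D(0, 4r₀/3) with |Re g(w)| ≤ C·A on D(0,4r₀/3) and M ≤ C·A, where C depends only on r₀ (with r₀ ∈ [√3/2, 1]). -/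
/-!
Divide out the zeros of `f` in the closed disc of radius `7r₀/5` one at a time. Comparing `|f(0)|`
with `f` on the circle of radius `9r₀/5` through a Blaschke product (Jensen's inequality) shows that
there are at most `9A` of them, so the process stops with `f = h · ∏ (z - w_j)` and `h` zero-free on
that disc. On the circle of radius `9r₀/5` every factor has `|z - w_j| ≥ 2r₀/5 ≥ 1/5`, so the
maximum principle gives `log |h| ≤ A + M log 5` on the disc, while `|f(0)| ≥ e^{-A}` gives
`log |h(0)| ≥ -A - M log 5`. Writing `h = e^g`, the Borel–Carathéodory inequality turns these
one-sided bounds into `|Re g| ≤ 81 (A + M log 5)` on the disc of radius `4r₀/3`.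
-/

open Metric Complex ComplexConjugate

theorem norm_le_of_forall_mem_sphere_norm_le {F : ℂ → ℂ} {c : ℂ} {R B : ℝ}
    (hF : DifferentiableOn ℂ F (closedBall c R)) (hB : ∀ z ∈ sphere c R, ‖F z‖ ≤ B) {z : ℂ}
    (hz : z ∈ ball c R) : ‖F z‖ ≤ B :=
  Complex.norm_le_of_forall_mem_frontier_norm_le isBounded_ball (hF.diffContOnCl_ball subset_rfl)
    (fun ζ hζ => hB ζ (frontier_ball_subset_sphere hζ)) (subset_closure hz)

theorem norm_sq_sub_conj_mul_eq_mul_norm_sub {R : ℝ} {z : ℂ} (hz : ‖z‖ = R) (w : ℂ) :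
    ‖(R : ℂ) ^ 2 - conj w * z‖ = R * ‖z - w‖ := by
  have hR : (R : ℂ) ^ 2 = conj z * z := by
    rw [← hz, ← ofReal_pow, ← normSq_eq_norm_sq, normSq_eq_conj_mul_self, mul_comm]
  rw [hR, ← sub_mul, ← map_sub, norm_mul, norm_conj, hz, mul_comm]

theorem exists_differentiableOn_exp_eq {h : ℂ → ℂ} {c : ℂ} {r : ℝ}
    (hd : DifferentiableOn ℂ h (ball c r)) (hne : ∀ z ∈ ball c r, h z ≠ 0) :
    ∃ g : ℂ → ℂ, DifferentiableOn ℂ g (ball c r) ∧ ∀ z ∈ ball c r, exp (g z) = h z := by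
  have hq : DifferentiableOn ℂ (fun z => deriv h z / h z) (ball c r) :=
    ((hd.analyticOnNhd isOpen_ball).deriv.differentiableOn).div hd hne
  obtain ⟨G, hGc, hG⟩ := hq.isExactOn_ball.with_val_at c (log (h c))
  refine ⟨G, fun z hz => (hG z hz).differentiableAt.differentiableWithinAt, fun z hz => ?_⟩
  have hc : c ∈ ball c r := mem_ball_self (pos_of_mem_ball hz)
  -- `G` is a primitive of `h' / h` with `exp (G c) = h c`, so `h · exp (-G)` is constant.
  have hE : ∀ y ∈ ball c r, HasDerivAt (fun y => h y * exp (-G y)) 0 y := by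
    intro y hy
    have hh := (hd.differentiableAt (isOpen_ball.mem_nhds hy)).hasDerivAt
    refine (hh.mul (hG y hy).neg.cexp).congr_deriv ?_
    field_simp [hne y hy]
    ring
  have hconst := isOpen_ball.is_const_of_deriv_eq_zero (convex_ball c r).isPreconnected
    (fun y hy => (hE y hy).differentiableAt.differentiableWithinAt) (fun y hy => (hE y hy).deriv)
    hz hc
  simp only [hGc, exp_neg, exp_log (hne c hc), mul_inv_cancel₀ (hne c hc)] at hconst
  exact ((mul_inv_eq_one₀ (exp_ne_zero _)).1 hconst).symm

theorem abs_re_le_of_forall_re_le {g : ℂ → ℂ} {R B : ℝ} {z : ℂ} (hB : 0 < B)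
    (hg : DifferentiableOn ℂ g (ball 0 R)) (hle : ∀ z ∈ ball 0 R, (g z).re ≤ B)
    (hge : -B ≤ (g 0).re) (hz : z ∈ ball 0 R) :
    |(g z).re| ≤ B + 4 * B * ‖z‖ / (R - ‖z‖) := by
  have hdiff : ‖g z - g 0‖ ≤ 2 * (2 * B) * ‖z‖ / (R - ‖z‖) := by
    refine borelCaratheodory_zero (by positivity) (hg.sub_const _) (fun y hy => ?_)
      (pos_of_mem_ball hz) hz (sub_self _)
    simp only [Set.mem_ofPred_eq, sub_re]
    linarith [hle y hy]
  have h0 : |(g 0).re| ≤ B := abs_le.2 ⟨hge, hle 0 (mem_ball_self (pos_of_mem_ball hz))⟩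
  calc |(g z).re| ≤ |(g z - g 0).re| + |(g 0).re| := by
        rw [sub_re]; linarith [abs_sub_abs_le_abs_sub (g z).re (g 0).re]
    _ ≤ 2 * (2 * B) * ‖z‖ / (R - ‖z‖) + B := add_le_add ((abs_re_le_norm _).trans hdiff) h0
    _ = B + 4 * B * ‖z‖ / (R - ‖z‖) := by ring

structure RootFactorization (U K : Set ℂ) (f : ℂ → ℂ) {k : ℕ} (w : Fin k → ℂ) (h : ℂ → ℂ) :
    Prop where
  differentiableOn : DifferentiableOn ℂ h U
  mem : ∀ j, w j ∈ K
  eq_mul_prod : ∀ z ∈ U, f z = h z * ∏ j, (z - w j)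

namespace RootFactorization

variable {U K : Set ℂ} {f h : ℂ → ℂ} {k : ℕ} {w : Fin k → ℂ}

theorem nil (hf : DifferentiableOn ℂ f U) : RootFactorization U K f ![] f :=
  ⟨hf, finZeroElim, by simp⟩

theorem cons {w₀ : ℂ} (hfac : RootFactorization U K (dslope f w₀) w h) (hw₀ : w₀ ∈ K)
    (hf₀ : f w₀ = 0) : RootFactorization U K f (Fin.cons w₀ w) h where
  differentiableOn := hfac.differentiableOn
  mem := Fin.cases hw₀ hfac.mem
  eq_mul_prod z hz := by
    rw [Fin.prod_univ_succ, Fin.cons_zero]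
    simp only [Fin.cons_succ]
    have hslope := sub_smul_dslope f w₀ z
    rw [hf₀, sub_zero, smul_eq_mul] at hslope
    rw [← hslope, hfac.eq_mul_prod z hz]
    ring

theorem apply_eq_zero (hfac : RootFactorization U K f w h) (hKU : K ⊆ U) (j : Fin k) :
    f (w j) = 0 := by
  rw [hfac.eq_mul_prod _ (hKU (hfac.mem j)), Finset.prod_eq_zero (Finset.mem_univ j) (sub_self _),
    mul_zero]

theorem prod_norm_le_pow {ρ : ℝ} (hfac : RootFactorization U (closedBall 0 ρ) f w h) :
    ∏ j, ‖w j‖ ≤ ρ ^ k := by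
  simpa using Finset.prod_le_prod (s := Finset.univ) (fun j _ => norm_nonneg (w j))
    (fun j _ => mem_closedBall_zero_iff.1 (hfac.mem j))

theorem norm_apply_zero_le {ρ : ℝ} (hfac : RootFactorization U (closedBall 0 ρ) f w h)
    (h0 : 0 ∈ U) : ‖f 0‖ ≤ ‖h 0‖ * ρ ^ k := by
  rw [hfac.eq_mul_prod 0 h0, norm_mul, norm_prod]
  simpa using mul_le_mul_of_nonneg_left hfac.prod_norm_le_pow (norm_nonneg (h 0))

theorem norm_mul_pow_le {ρ R S B : ℝ} (hfac : RootFactorization (ball 0 S) (closedBall 0 ρ) f w h)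
    (hρR : ρ ≤ R) (hRS : R < S) (hB : ∀ z ∈ sphere 0 R, ‖f z‖ ≤ B) {z : ℂ} (hz : z ∈ ball 0 R) :
    ‖h z‖ * (R - ρ) ^ k ≤ B := by
  have hnorm : ∀ ζ, ‖(((R - ρ) ^ k : ℝ) : ℂ) * h ζ‖ = ‖h ζ‖ * (R - ρ) ^ k := fun ζ => by
    rw [norm_mul, norm_real, Real.norm_of_nonneg (pow_nonneg (sub_nonneg.2 hρR) k), mul_comm]
  have hF : DifferentiableOn ℂ (fun z => ((R - ρ) ^ k : ℝ) * h z) (closedBall 0 R) :=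
    (hfac.differentiableOn.mono (closedBall_subset_ball hRS)).const_mul _
  rw [← hnorm]
  refine norm_le_of_forall_mem_sphere_norm_le hF (fun ζ hζ => ?_) hz
  have hζS : ζ ∈ ball (0 : ℂ) S := sphere_subset_closedBall.trans (closedBall_subset_ball hRS) hζ
  have hdist : ∀ j, R - ρ ≤ ‖ζ - w j‖ := fun j => by
    linarith [norm_sub_norm_le ζ (w j), mem_sphere_zero_iff_norm.1 hζ,
      mem_closedBall_zero_iff.1 (hfac.mem j)]
  calc ‖(((R - ρ) ^ k : ℝ) : ℂ) * h ζ‖ = ‖h ζ‖ * ∏ _j : Fin k, (R - ρ) := by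
        rw [hnorm, Finset.prod_const, Finset.card_univ, Fintype.card_fin]
    _ ≤ ‖h ζ‖ * ∏ j, ‖ζ - w j‖ := by gcongr with j; exact hdist j
    _ = ‖f ζ‖ := by rw [hfac.eq_mul_prod ζ hζS, norm_mul, norm_prod]
    _ ≤ B := hB ζ hζ

theorem norm_apply_zero_mul_pow_le {ρ R S B : ℝ}
    (hfac : RootFactorization (ball 0 S) (closedBall 0 ρ) f w h) (hR : 0 < R) (hRS : R < S)
    (hB : ∀ z ∈ sphere 0 R, ‖f z‖ ≤ B) : ‖f 0‖ * R ^ k ≤ B * ρ ^ k := by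
  -- Replacing each `z - w j` by `R ^ 2 - conj (w j) * z` keeps `‖f‖ * R ^ k` on the circle
  -- `‖z‖ = R` but moves the value at `0` up to `‖h 0‖ * R ^ (2 * k)`.
  set F : ℂ → ℂ := fun z => h z * ∏ j, ((R : ℂ) ^ 2 - conj (w j) * z)
  have hF : DifferentiableOn ℂ F (closedBall 0 R) :=
    (hfac.differentiableOn.mono (closedBall_subset_ball hRS)).mul (by fun_prop)
  have hFB : ∀ ζ ∈ sphere (0 : ℂ) R, ‖F ζ‖ ≤ B * R ^ k := fun ζ hζ => by
    have hζS : ζ ∈ ball (0 : ℂ) S := sphere_subset_closedBall.trans (closedBall_subset_ball hRS) hζ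
    have hζR := mem_sphere_zero_iff_norm.1 hζ
    calc ‖F ζ‖ = ‖f ζ‖ * R ^ k := by
          simp only [F, hfac.eq_mul_prod ζ hζS, norm_mul, norm_prod,
            norm_sq_sub_conj_mul_eq_mul_norm_sub hζR, Finset.prod_mul_distrib]
          simp only [Finset.prod_const, Finset.card_univ, Fintype.card_fin]
          ring
      _ ≤ B * R ^ k := by gcongr; exact hB ζ hζ
  have hF0 : ‖h 0‖ * R ^ k * R ^ k ≤ B * R ^ k := by
    convert norm_le_of_forall_mem_sphere_norm_le hF hFB (mem_ball_self hR) using 1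
    simp [F, abs_of_pos hR]
    ring
  calc ‖f 0‖ * R ^ k ≤ ‖h 0‖ * ρ ^ k * R ^ k := by
        gcongr; exact hfac.norm_apply_zero_le (mem_ball_self (hR.trans hRS))
    _ = ‖h 0‖ * R ^ k * ρ ^ k := by ring
    _ ≤ B * ρ ^ k := by
        gcongr
        · exact (Finset.prod_nonneg fun j _ => norm_nonneg (w j)).trans hfac.prod_norm_le_pow
        · exact le_of_mul_le_mul_right hF0 (by positivity)

theorem card_mul_log_le {ρ R S B : ℝ}
    (hfac : RootFactorization (ball 0 S) (closedBall 0 ρ) f w h) (hρ : 0 < ρ) (hR : 0 < R)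
    (hRS : R < S) (hB : ∀ z ∈ sphere 0 R, ‖f z‖ ≤ B) (hf0 : f 0 ≠ 0) :
    k * Real.log (R / ρ) ≤ Real.log B - Real.log ‖f 0‖ := by
  have hle := hfac.norm_apply_zero_mul_pow_le hR hRS hB
  have hB0 : 0 < B := pos_of_mul_pos_left ((by positivity : 0 < ‖f 0‖ * R ^ k).trans_le hle)
    (by positivity)
  have hlog := Real.log_le_log (by positivity) hle
  rw [Real.log_mul (by positivity) (by positivity), Real.log_mul hB0.ne' (by positivity),
    Real.log_pow, Real.log_pow] at hlog
  rw [Real.log_div hR.ne' hρ.ne']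
  linarith

end RootFactorization

open RootFactorization in
theorem exists_rootFactorization_ne_zero {U K : Set ℂ} (hU : IsOpen U) (hKU : K ⊆ U) (n : ℕ) :
    ∀ f : ℂ → ℂ, DifferentiableOn ℂ f U →
      (∀ (k : ℕ) (w : Fin k → ℂ) (h : ℂ → ℂ), RootFactorization U K f w h → k ≤ n) →
      ∃ (k : ℕ) (w : Fin k → ℂ) (h : ℂ → ℂ), RootFactorization U K f w h ∧ ∀ z ∈ K, h z ≠ 0 := by
  induction n with
  | zero =>
    intro f hf hcard
    refine ⟨0, ![], f, nil hf, fun z hz hfz => ?_⟩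
    have hslope := (differentiableOn_dslope (hU.mem_nhds (hKU hz))).2 hf
    exact absurd (hcard _ _ _ ((nil hslope).cons hz hfz)) (by simp)
  | succ n ih =>
    intro f hf hcard
    by_cases hzero : ∃ z ∈ K, f z = 0
    · obtain ⟨z, hz, hfz⟩ := hzero
      have hslope := (differentiableOn_dslope (hU.mem_nhds (hKU hz))).2 hf
      obtain ⟨k, w, h, hfac, hne⟩ := ih _ hslope fun k w h hfac =>
        Nat.le_of_succ_le_succ (hcard _ _ _ (hfac.cons hz hfz))
      exact ⟨_, _, h, hfac.cons hz hfz, hne⟩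
    · push Not at hzero
      exact ⟨0, ![], f, nil hf, hzero⟩

theorem card_le_nine_mul {r₀ A : ℝ} {f h : ℂ → ℂ} {k : ℕ} {w : Fin k → ℂ} (hr₀ : 0 < r₀)
    (hfA : ∀ z ∈ ball (0 : ℂ) (2 * r₀), ‖f z‖ ≤ Real.exp A) (hf0 : Real.exp (-A) ≤ ‖f 0‖)
    (hfac : RootFactorization (ball 0 (2 * r₀)) (closedBall 0 (7 * r₀ / 5)) f w h) :
    (k : ℝ) ≤ 9 * A := by
  have hf0' : 0 < ‖f 0‖ := (Real.exp_pos _).trans_le hf0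
  have hcount := hfac.card_mul_log_le (R := 9 * r₀ / 5) (by positivity) (by positivity)
    (by linarith) (fun z hz => hfA z (sphere_subset_closedBall.trans
      (closedBall_subset_ball (by linarith)) hz)) (norm_pos_iff.1 hf0')
  have hratio : 9 * r₀ / 5 / (7 * r₀ / 5) = 9 / 7 := by field_simp
  have hlog97 : 2 / 9 ≤ Real.log (9 / 7) := by
    have := Real.one_sub_inv_le_log_of_pos (show (0 : ℝ) < 9 / 7 by norm_num)
    norm_num at this ⊢; linarith
  have hlogf0 : -A ≤ Real.log ‖f 0‖ := (Real.le_log_iff_exp_le hf0').2 hf0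
  rw [hratio, Real.log_exp] at hcount
  nlinarith [Nat.cast_nonneg (α := ℝ) k]

theorem re_le_of_rootFactorization {r₀ A : ℝ} {f h g : ℂ → ℂ} {M : ℕ} {w : Fin M → ℂ}
    (hr₀ : 1 / 2 ≤ r₀) (hfA : ∀ z ∈ ball (0 : ℂ) (2 * r₀), ‖f z‖ ≤ Real.exp A)
    (hfac : RootFactorization (ball 0 (2 * r₀)) (closedBall 0 (7 * r₀ / 5)) f w h)
    (hgh : ∀ z ∈ ball 0 (7 * r₀ / 5), exp (g z) = h z) {z : ℂ} (hz : z ∈ ball 0 (7 * r₀ / 5)) :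
    (g z).re ≤ A + M * Real.log 5 := by
  have hbound := hfac.norm_mul_pow_le (R := 9 * r₀ / 5) (by linarith) (by linarith)
    (fun ζ hζ => hfA ζ (sphere_subset_closedBall.trans (closedBall_subset_ball (by linarith)) hζ))
    (ball_subset_ball (by linarith) hz)
  rw [← Real.exp_le_exp, Real.exp_add, Real.exp_nat_mul, Real.exp_log (by norm_num), ← norm_exp,
    hgh z hz]
  calc ‖h z‖ = ‖h z‖ * (1 / 5) ^ M * 5 ^ M := by rw [mul_assoc, ← mul_pow]; norm_num
    _ ≤ ‖h z‖ * (9 * r₀ / 5 - 7 * r₀ / 5) ^ M * 5 ^ M := by gcongr; linarith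
    _ ≤ Real.exp A * 5 ^ M := by gcongr

theorem neg_le_re_zero_of_rootFactorization {r₀ A : ℝ} {f h g : ℂ → ℂ} {M : ℕ} {w : Fin M → ℂ}
    (hr₀ : 0 < r₀) (hr₀₁ : r₀ ≤ 1) (hf0 : Real.exp (-A) ≤ ‖f 0‖)
    (hfac : RootFactorization (ball 0 (2 * r₀)) (closedBall 0 (7 * r₀ / 5)) f w h)
    (hgh : ∀ z ∈ ball 0 (7 * r₀ / 5), exp (g z) = h z) :
    -(A + M * Real.log 5) ≤ (g 0).re := by
  have hbound := hfac.norm_apply_zero_le (mem_ball_self (by linarith))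
  rw [← Real.exp_le_exp, ← mul_le_mul_iff_of_pos_right (by positivity : (0 : ℝ) < 5 ^ M),
    ← norm_exp, hgh 0 (mem_ball_self (by linarith))]
  calc Real.exp (-(A + M * Real.log 5)) * 5 ^ M = Real.exp (-A) := by
        rw [neg_add, Real.exp_add, Real.exp_neg (_ * _), Real.exp_nat_mul,
          Real.exp_log (by norm_num), inv_mul_cancel_right₀ (by positivity)]
    _ ≤ ‖h 0‖ * (7 * r₀ / 5) ^ M := hf0.trans hbound
    _ ≤ ‖h 0‖ * 5 ^ M := by gcongr; linarith

/-- factorization `f = e^g ∏ (w - w_j)` of a holomorphic function on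
`D(0, 2r₀)` with `|f| ≤ e^A` and `|f(0)| ≥ e^{-A}`, where the `w_j` are zeros of `f`
in `D(0, 3r₀/2)`, `|Re g| ≤ C·A` on `D(0, 4r₀/3)` and `M ≤ C·A`, with `C` depending
only on `r₀ ∈ [√3/2, 1]` (hence a universal constant). -/
theorem stmt15 : ∃ C : ℝ, 0 < C ∧
    ∀ r₀ : ℝ, Real.sqrt 3 / 2 ≤ r₀ → r₀ ≤ 1 →
    ∀ A : ℝ, 1 ≤ A →
    ∀ f : ℂ → ℂ, DifferentiableOn ℂ f (Metric.ball 0 (2 * r₀)) →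
      (∀ w ∈ Metric.ball (0 : ℂ) (2 * r₀), ‖f w‖ ≤ Real.exp A) →
      Real.exp (-A) ≤ ‖f 0‖ →
      ∃ (M : ℕ) (w : Fin M → ℂ) (g : ℂ → ℂ),
        (∀ j, w j ∈ Metric.ball (0 : ℂ) (3 * r₀ / 2) ∧ f (w j) = 0) ∧
        DifferentiableOn ℂ g (Metric.ball 0 (4 * r₀ / 3)) ∧
        (∀ z ∈ Metric.ball (0 : ℂ) (4 * r₀ / 3),
          f z = Complex.exp (g z) * ∏ j, (z - w j)) ∧
        (∀ z ∈ Metric.ball (0 : ℂ) (4 * r₀ / 3), |(g z).re| ≤ C * A) ∧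
        (M : ℝ) ≤ C * A := by
  refine ⟨3000, by norm_num, fun r₀ hr₀ hr₀₁ A hA f hf hfA hf0 => ?_⟩
  have hr₀' : 1 / 2 ≤ r₀ :=
    le_trans (by linarith [Real.one_le_sqrt.2 (by norm_num : (1 : ℝ) ≤ 3)]) hr₀
  have hKU : closedBall (0 : ℂ) (7 * r₀ / 5) ⊆ ball 0 (2 * r₀) :=
    closedBall_subset_ball (by linarith)
  obtain ⟨M, w, h, hfac, hne⟩ := exists_rootFactorization_ne_zero isOpen_ball hKU ⌊9 * A⌋₊ f hf
    fun k w h hfac => Nat.le_floor (card_le_nine_mul (by linarith) hfA hf0 hfac)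
  have hM : (M : ℝ) ≤ 9 * A := card_le_nine_mul (by linarith) hfA hf0 hfac
  obtain ⟨g, hg, hgh⟩ := exists_differentiableOn_exp_eq
    (hfac.differentiableOn.mono (ball_subset_ball (by linarith)))
    (fun z hz => hne z (ball_subset_closedBall hz))
  have hsub : ball (0 : ℂ) (4 * r₀ / 3) ⊆ ball 0 (7 * r₀ / 5) := ball_subset_ball (by linarith)
  refine ⟨M, w, g, fun j => ⟨closedBall_subset_ball (by linarith) (hfac.mem j),
    hfac.apply_eq_zero hKU j⟩, hg.mono hsub, fun z hz => ?_, fun z hz => ?_, by linarith⟩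
  · rw [hfac.eq_mul_prod z (hKU (ball_subset_closedBall (hsub hz))), hgh z (hsub hz)]
  · set B := A + M * Real.log 5 with hB
    have hlog5 : Real.log 5 ≤ 4 := by
      linarith [Real.log_le_sub_one_of_pos (by norm_num : (0 : ℝ) < 5)]
    calc |(g z).re| ≤ B + 4 * B * ‖z‖ / (7 * r₀ / 5 - ‖z‖) :=
          abs_re_le_of_forall_re_le (by positivity) hg
            (fun y hy => re_le_of_rootFactorization hr₀' hfA hfac hgh hy)
            (neg_le_re_zero_of_rootFactorization (by linarith) hr₀₁ hf0 hfac hgh) (hsub hz)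
      _ ≤ B + 4 * B * 20 := by
          rw [mul_div_assoc]
          gcongr
          rw [div_le_iff₀ (by linarith [mem_ball_zero_iff.1 (hsub hz)])]
          linarith [mem_ball_zero_iff.1 hz]
      _ ≤ 3000 * A := by nlinarith [Nat.cast_nonneg (α := ℝ) M]
end

section
/- Let f be holomorphic on a neighborhood of the closed disc of radius r₀ ∈ [√3/2,1], with M zeros w₁,…,w_M (counted with multiplicity, |w_j| = r_j) in D(0, 3r₀/2), and suppose that whenever |f(w)| < ε for some |w| = r < r₀ then ∏_{j=1}^M |r − r_j| ≤ ε e^{B} for a constant B ≥ 0. Then the Lebesgue measure of the set Ω(ε) = { r ∈ [0, r₀) : ∃ w, |w| = r, |f(w)| < ε } is at most 2M (ε e^{B})^{1/M}, provided ε e^{B} ≤ 1. -/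
/-! With `δ ^ M = ε e^B`, a radius farther than `δ` from every `r_j` makes the product
`∏ |r - r_j|` exceed `ε e^B`, so `Ω(ε)` is covered by the `M` intervals `[r_j - δ, r_j + δ]`. -/

open MeasureTheory Metric

section ProdAbsSub

variable {ι : Type*} [Fintype ι] [Nonempty ι] (r : ι → ℝ)

theorem setOf_prod_abs_sub_le_pow_subset_iUnion_closedBall {δ : ℝ} (hδ : 0 < δ) :
    {x : ℝ | ∏ j, |x - r j| ≤ δ ^ Fintype.card ι} ⊆ ⋃ j, closedBall (r j) δ := by
  intro x hx
  by_contra hfar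
  simp only [Set.mem_iUnion, mem_closedBall, Real.dist_eq, not_exists, not_le] at hfar
  have hlt : ∏ _j : ι, δ < ∏ j, |x - r j| :=
    Finset.prod_lt_prod_of_nonempty (fun _ _ => hδ) (fun j _ => hfar j) Finset.univ_nonempty
  rw [Finset.prod_const, Finset.card_univ] at hlt
  exact hlt.not_ge hx

theorem volume_setOf_prod_abs_sub_le_pow_le {δ : ℝ} (hδ : 0 < δ) :
    volume {x : ℝ | ∏ j, |x - r j| ≤ δ ^ Fintype.card ι}
      ≤ ENNReal.ofReal (2 * Fintype.card ι * δ) :=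
  calc volume {x : ℝ | ∏ j, |x - r j| ≤ δ ^ Fintype.card ι}
      ≤ volume (⋃ j, closedBall (r j) δ) :=
        measure_mono (setOf_prod_abs_sub_le_pow_subset_iUnion_closedBall r hδ)
    _ ≤ ∑ j, volume (closedBall (r j) δ) := measure_iUnion_fintype_le _ _
    _ = ENNReal.ofReal (2 * Fintype.card ι * δ) := by
        simp only [Real.volume_closedBall, Finset.sum_const, Finset.card_univ]
        rw [← ENNReal.ofReal_nsmul, nsmul_eq_mul]
        ring_nf

theorem volume_setOf_prod_abs_sub_le_le {A : ℝ} (hA : 0 < A) :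
    volume {x : ℝ | ∏ j, |x - r j| ≤ A}
      ≤ ENNReal.ofReal (2 * Fintype.card ι * A ^ ((1 : ℝ) / Fintype.card ι)) := by
  have hroot : (A ^ ((1 : ℝ) / Fintype.card ι)) ^ Fintype.card ι = A := by
    rw [one_div, Real.rpow_inv_natCast_pow hA.le Fintype.card_ne_zero]
  conv_lhs => rw [← hroot]
  exact volume_setOf_prod_abs_sub_le_pow_le r (Real.rpow_pos_of_pos hA _)

end ProdAbsSub

theorem stmt16_general (M : ℕ) (hM : 1 ≤ M) (r₀ : ℝ)
    (f : ℂ → ℂ)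
    (r : Fin M → ℝ)
    (ε B : ℝ) (hε : 0 < ε)
    (hyp : ∀ z : ℂ, ‖z‖ < r₀ → ‖f z‖ < ε → ∏ j, |‖z‖ - r j| ≤ ε * Real.exp B) :
    volume {x : ℝ | x ∈ Set.Ico 0 r₀ ∧ ∃ z : ℂ, ‖z‖ = x ∧ ‖f z‖ < ε}
      ≤ ENNReal.ofReal (2 * M * (ε * Real.exp B) ^ ((1 : ℝ) / M)) := by
  have : Nonempty (Fin M) := ⟨⟨0, hM⟩⟩
  have hsub : {x : ℝ | x ∈ Set.Ico 0 r₀ ∧ ∃ z : ℂ, ‖z‖ = x ∧ ‖f z‖ < ε}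
      ⊆ {x : ℝ | ∏ j, |x - r j| ≤ ε * Real.exp B} := by
    rintro x ⟨⟨-, hxr₀⟩, z, rfl, hfz⟩
    exact hyp z hxr₀ hfz
  simpa only [Fintype.card_fin] using
    (measure_mono hsub).trans (volume_setOf_prod_abs_sub_le_le r (by positivity))

/-- if whenever `|f(w)| < ε` on `|w| = r < r₀` one has
`∏_j |r − r_j| ≤ ε e^B` (with `r_j = |w_j|`, `w_j` the zeros of `f` in
`D(0, 3r₀/2)`), then the set `Ω(ε) = {r ∈ [0, r₀) : ∃ w, |w| = r, |f(w)| < ε}`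
has Lebesgue measure at most `2M (ε e^B)^{1/M}`, provided `ε e^B ≤ 1`. -/
theorem stmt16 (M : ℕ) (hM : 1 ≤ M) (r₀ : ℝ)
    (hr₀ : Real.sqrt 3 / 2 ≤ r₀) (hr₀' : r₀ ≤ 1)
    (f : ℂ → ℂ) (hf : DifferentiableOn ℂ f (Metric.ball 0 (2 * r₀)))
    (w : Fin M → ℂ) (hw : ∀ j, w j ∈ Metric.ball (0 : ℂ) (3 * r₀ / 2) ∧ f (w j) = 0)
    (r : Fin M → ℝ) (hr : ∀ j, r j = ‖w j‖)
    (ε B : ℝ) (hε : 0 < ε) (hB : 0 ≤ B) (hsmall : ε * Real.exp B ≤ 1)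
    (hyp : ∀ z : ℂ, ‖z‖ < r₀ → ‖f z‖ < ε → ∏ j, |‖z‖ - r j| ≤ ε * Real.exp B) :
    volume {x : ℝ | x ∈ Set.Ico 0 r₀ ∧ ∃ z : ℂ, ‖z‖ = x ∧ ‖f z‖ < ε}
      ≤ ENNReal.ofReal (2 * M * (ε * Real.exp B) ^ ((1 : ℝ) / M)) :=
  stmt16_general M hM r₀ f r ε B hε hyp
end

section
/- Let μ(dr) = Ĉ e^{φ(r)} r^{2D−1} dr be a probability measure on [0, r₀] with |φ'(r)| ≤ K for all r, D ≥ 1, and set r̃₀ = min(1, D/K)/C₀ for a sufficiently large constant C₀ (assume 2r̃₀ ≤ r₀). Define μ̃(dr) = Ĉ e^{φ(max(r, r̃₀))} max(r, r̃₀)^{2D−1} dr. Then μ ≤ μ̃ pointwise and μ̃([0, r₀]) ≤ C for a constant C depending only on C₀ (in particular μ̃([0, r̃₀]) ≤ μ([r̃₀, 2r̃₀]) ≤ 1). -/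
/-!
With `n = 2D - 1`, the function `r ↦ e^{φ(r)} r^n` is nondecreasing on `[0, n/K]`, since its
logarithmic derivative `φ' + n/r` is nonnegative there. Taking `C₀ = 2` gives
`2r̃₀ ≤ D/K ≤ n/K`, so the truncated density `r ↦ e^{φ(max(r, r̃₀))} max(r, r̃₀)^n` dominates the
original one, and its mass on `[0, r̃₀]` (its value at `r̃₀` times `r̃₀`) is at most the `μ`-mass
of `[r̃₀, 2r̃₀]`. Beyond `r̃₀` the two densities agree, so `μ̃` has total mass at most `2`.
-/

open MeasureTheory Real Set
open scoped ENNReal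

theorem monotoneOn_exp_mul_pow {φ φ' : ℝ → ℝ} {K : ℝ} (n : ℕ)
    (hφ : ∀ x, HasDerivAt φ (φ' x) x) (hφ' : ∀ x ∈ Ioo 0 (n / K), |φ' x| ≤ K) :
    MonotoneOn (fun r => exp (φ r) * r ^ n) (Icc 0 (n / K)) := by
  have hderiv (x : ℝ) : HasDerivAt (fun r => exp (φ r) * r ^ n)
      (exp (φ x) * φ' x * x ^ n + exp (φ x) * (n * x ^ (n - 1))) x :=
    ((hφ x).exp).mul (hasDerivAt_pow n x)
  refine monotoneOn_of_hasDerivWithinAt_nonneg (convex_Icc _ _)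
    (continuous_iff_continuousAt.2 fun x => (hderiv x).continuousAt).continuousOn
    (fun x _ => (hderiv x).hasDerivWithinAt) ?_
  rw [interior_Icc]
  rintro x hx
  have hK : 0 < K := lt_of_le_of_ne ((abs_nonneg _).trans (hφ' x hx))
    (by rintro rfl; linarith [hx.1, hx.2, div_zero (n : ℝ)])
  obtain ⟨m, rfl⟩ : ∃ m, n = m + 1 :=
    Nat.exists_eq_succ_of_ne_zero (by rintro rfl; linarith [hx.1, hx.2, zero_div K])
  have hKx : K * x < m + 1 := by
    have := hx.2
    push_cast [lt_div_iff₀ hK] at this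
    linarith
  have hφx : -(K * x) ≤ φ' x * x := by nlinarith [neg_abs_le (φ' x), hφ' x hx, hx.1]
  have : exp (φ x) * φ' x * x ^ (m + 1) + exp (φ x) * ((m + 1 : ℕ) * x ^ (m + 1 - 1))
      = exp (φ x) * x ^ m * (φ' x * x + (m + 1)) := by push_cast; ring
  rw [this]
  exact mul_nonneg (mul_nonneg (exp_pos _).le (pow_nonneg hx.1.le m)) (by linarith)

theorem withDensity_apply_univ_le_add {α : Type*} [MeasurableSpace α] {ν : Measure α}
    {f g : α → ℝ≥0∞} {s : Set α} (hs : MeasurableSet s) (hfg : ∀ᵐ x ∂ν, x ∉ s → f x ≤ g x) :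
    ν.withDensity f univ ≤ ν.withDensity f s + ν.withDensity g univ := by
  rw [← measure_add_measure_compl hs (μ := ν.withDensity f)]
  refine add_le_add le_rfl ?_
  rw [withDensity_apply _ hs.compl, withDensity_apply _ MeasurableSet.univ, Measure.restrict_univ]
  exact (setLIntegral_mono_ae' hs.compl hfg).trans (setLIntegral_le_lintegral _ _)

section TruncatedDensity

variable {g : ℝ → ℝ≥0∞} {a b r₀ : ℝ}

theorem withDensity_le_withDensity_max (hg : MonotoneOn g (Icc 0 b)) (hab : a ≤ b) :
    (volume.restrict (Icc 0 r₀)).withDensity g ≤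
      (volume.restrict (Icc 0 r₀)).withDensity (fun x => g (max x a)) := by
  refine withDensity_mono ?_
  filter_upwards [ae_restrict_mem measurableSet_Icc] with x hx
  rcases le_total x a with hxa | hax
  · rw [max_eq_right hxa]
    exact hg ⟨hx.1, hxa.trans hab⟩ ⟨hx.1.trans hxa, hab⟩ hxa
  · rw [max_eq_left hax]

theorem withDensity_max_Icc_le (hg : MonotoneOn g (Icc 0 b)) (ha : 0 ≤ a) (hab : 2 * a ≤ b)
    (har : 2 * a ≤ r₀) :
    (volume.restrict (Icc 0 r₀)).withDensity (fun x => g (max x a)) (Icc 0 a) ≤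
      (volume.restrict (Icc 0 r₀)).withDensity g (Icc a (2 * a)) := by
  rw [withDensity_apply _ measurableSet_Icc, withDensity_apply _ measurableSet_Icc,
    Measure.restrict_restrict_of_subset (Icc_subset_Icc le_rfl (by linarith)),
    Measure.restrict_restrict_of_subset (Icc_subset_Icc ha har)]
  -- Both sides compare with `g a` times the length `a` of the interval.
  calc ∫⁻ x in Icc 0 a, g (max x a) = ∫⁻ _ in Icc a (2 * a), g a := by
        rw [setLIntegral_congr_fun measurableSet_Icc (fun x hx => by rw [max_eq_right hx.2]),
          setLIntegral_const, setLIntegral_const, Real.volume_Icc, Real.volume_Icc]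
        ring_nf
    _ ≤ ∫⁻ x in Icc a (2 * a), g x := setLIntegral_mono' measurableSet_Icc fun x hx =>
        hg ⟨ha, by linarith⟩ ⟨ha.trans hx.1, hx.2.trans hab⟩ hx.1

theorem withDensity_max_univ_le :
    (volume.restrict (Icc 0 r₀)).withDensity (fun x => g (max x a)) univ ≤
      (volume.restrict (Icc 0 r₀)).withDensity (fun x => g (max x a)) (Icc 0 a) +
        (volume.restrict (Icc 0 r₀)).withDensity g univ := by
  refine withDensity_apply_univ_le_add measurableSet_Icc ?_
  filter_upwards [ae_restrict_mem measurableSet_Icc] with x hx hxa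
  rw [max_eq_left (not_le.1 fun h => hxa ⟨hx.1, h⟩).le]

end TruncatedDensity

/-- for a probability measure `μ(dr) = Ĉ e^{φ(r)} r^{2D−1} dr` on
`[0, r₀]` with `|φ'| ≤ K`, setting `r̃₀ = min(1, D/K)/C₀` for a sufficiently large
constant `C₀` (with `2r̃₀ ≤ r₀`) and
`μ̃(dr) = Ĉ e^{φ(max(r,r̃₀))} max(r,r̃₀)^{2D−1} dr`, one has `μ ≤ μ̃`,
`μ̃([0,r̃₀]) ≤ μ([r̃₀,2r̃₀]) ≤ 1`, and `μ̃` has total mass at most a constant `C`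
depending only on `C₀`. -/
theorem stmt18 :
    ∃ C₀ : ℝ, 1 ≤ C₀ ∧ ∃ C : ℝ, 0 < C ∧
    ∀ (r₀ K Chat : ℝ) (D : ℕ) (φ φ' : ℝ → ℝ),
      0 < K → 1 ≤ D → 0 < Chat →
      (∀ x, HasDerivAt φ (φ' x) x) → (∀ x, |φ' x| ≤ K) →
      ∀ rt₀ : ℝ, rt₀ = min 1 ((D : ℝ) / K) / C₀ →
      2 * rt₀ ≤ r₀ →
      ∀ μ μt : Measure ℝ,
        μ = (volume.restrict (Set.Icc 0 r₀)).withDensity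
              (fun x => ENNReal.ofReal (Chat * Real.exp (φ x) * x ^ (2 * D - 1))) →
        μt = (volume.restrict (Set.Icc 0 r₀)).withDensity
              (fun x => ENNReal.ofReal
                (Chat * Real.exp (φ (max x rt₀)) * (max x rt₀) ^ (2 * D - 1))) →
        μ Set.univ = 1 →
        μ ≤ μt ∧ μt (Set.Icc 0 rt₀) ≤ μ (Set.Icc rt₀ (2 * rt₀)) ∧
          μ (Set.Icc rt₀ (2 * rt₀)) ≤ 1 ∧ μt Set.univ ≤ ENNReal.ofReal C := by
  refine ⟨2, by norm_num, 2, by norm_num, ?_⟩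
  intro r₀ K Chat D φ φ' hK hD hChat hφ hφ' rt₀ hrt h2r μ μt hμ hμt hμ1
  set n := 2 * D - 1
  set g : ℝ → ℝ≥0∞ := fun x => ENNReal.ofReal (Chat * exp (φ x) * x ^ n)
  have hmono : MonotoneOn g (Icc 0 (n / K)) :=
    fun x hx y hy hxy => ENNReal.ofReal_le_ofReal <| by
      simpa only [mul_assoc] using mul_le_mul_of_nonneg_left
        (monotoneOn_exp_mul_pow n hφ (fun x _ => hφ' x) hx hy hxy) hChat.le
  have hrt0 : 0 ≤ rt₀ := by rw [hrt]; positivity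
  have h2rt : 2 * rt₀ ≤ n / K := by
    have hDn : (D : ℝ) ≤ n := by exact_mod_cast (by omega : D ≤ n)
    rw [hrt, mul_div_cancel₀ _ two_ne_zero]
    exact (min_le_right _ _).trans (div_le_div_of_nonneg_right hDn hK.le)
  replace hμt : μt = (volume.restrict (Icc 0 r₀)).withDensity (fun x => g (max x rt₀)) := hμt
  have hle : μ ≤ μt := by
    rw [hμ, hμt]; exact withDensity_le_withDensity_max hmono (by linarith)
  have hcmp : μt (Icc 0 rt₀) ≤ μ (Icc rt₀ (2 * rt₀)) := by
    rw [hμ, hμt]; exact withDensity_max_Icc_le hmono hrt0 h2rt h2r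
  have hsplit : μt univ ≤ μt (Icc 0 rt₀) + μ univ := by
    rw [hμ, hμt]; exact withDensity_max_univ_le
  have hμ_le_one (s : Set ℝ) : μ s ≤ 1 := hμ1 ▸ measure_mono (subset_univ s)
  refine ⟨hle, hcmp, hμ_le_one _, ?_⟩
  calc μt univ ≤ 1 + 1 := hsplit.trans (add_le_add (hcmp.trans (hμ_le_one _)) hμ1.le)
    _ = ENNReal.ofReal 2 := by norm_num
end
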